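/- arXiv:2006.14527 — 5 statements merged into one kernel-verified Lean document; each statement's English description precedes it below -/
import Mathlib

section
/- Let H be a critical, non-circular 3-hypergraph with |V(H)| ≥ 5, and let C be a component of 𝒫(H) of even order (a path, with isomorphism φ_C from P_{v(C)} onto C). Then for every edge e ∈ E(H) with e ∩ V(C) ≠ ∅ and e \ V(C) ≠ ∅, there exist i, j ∈ {0,…,v(C)/2 − 1} with i ≤ j such that e ∩ V(C) = {φ_C(2i), φ_C(2j+1)}. -/
/-- `M` is a module of the hypergraph with vertex set `verts` and edge set `edges`. -/
def IsModule {α : Type*} [DecidableEq α] (verts : Finset α) (edges : Set (Finset α))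
    (M : Finset α) : Prop :=
  M ⊆ verts ∧ ∀ e ∈ edges, (e ∩ M).Nonempty → (e \ M).Nonempty →
    ∃ m ∈ M, e ∩ M = {m} ∧ ∀ n ∈ M, (e \ {m}) ∪ {n} ∈ edges

/-- `(verts, edges)` is a hypergraph: edges are nonempty subsets of `verts`. -/
def IsHypergraph {α : Type*} (verts : Finset α) (edges : Set (Finset α)) : Prop :=
  ∀ e ∈ edges, e ⊆ verts ∧ e.Nonempty

/-- `(verts, edges)` is a 3-hypergraph: edges are 3-element subsets of `verts`. -/
def Is3Hypergraph {α : Type*} (verts : Finset α) (edges : Set (Finset α)) : Prop :=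
  ∀ e ∈ edges, e ⊆ verts ∧ e.card = 3

/-- Edges of the subhypergraph induced by `W`. -/
def induceEdges {α : Type*} (W : Finset α) (edges : Set (Finset α)) : Set (Finset α) :=
  {e ∈ edges | e ⊆ W}

/-- A hypergraph is prime if it has at least 3 vertices and all its modules are trivial. -/
def IsPrime {α : Type*} [DecidableEq α] (verts : Finset α) (edges : Set (Finset α)) : Prop :=
  3 ≤ verts.card ∧ ∀ M, IsModule verts edges M → M = ∅ ∨ M = verts ∨ ∃ v, M = {v}

/-- A prime hypergraph is critical if removing any vertex destroys primality. -/
def IsCritical {α : Type*} [DecidableEq α] (verts : Finset α) (edges : Set (Finset α)) : Prop :=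
  IsPrime verts edges ∧
    ∀ v ∈ verts, ¬ IsPrime (verts.erase v) (induceEdges (verts.erase v) edges)

/-- Adjacency in the primality graph: `v ≠ w` and `H - {v, w}` is prime. -/
def PrimAdj {α : Type*} [DecidableEq α] (verts : Finset α) (edges : Set (Finset α))
    (v w : α) : Prop :=
  v ≠ w ∧ v ∈ verts ∧ w ∈ verts ∧
    IsPrime (verts \ {v, w}) (induceEdges (verts \ {v, w}) edges)


/-- `(verts, arc)` is a tournament: the arc relation is irreflexive and, on distinct
vertices of `verts`, exactly one of `arc x y`, `arc y x` holds. -/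
def IsTournament {α : Type*} (verts : Finset α) (arc : α → α → Prop) : Prop :=
  (∀ x, ¬ arc x x) ∧ ∀ x ∈ verts, ∀ y ∈ verts, x ≠ y → (arc x y ↔ ¬ arc y x)

/-- `M` is a module of the tournament `(verts, arc)`. -/
def TournMod {α : Type*} (verts : Finset α) (arc : α → α → Prop) (M : Finset α) : Prop :=
  M ⊆ verts ∧ ∀ x ∈ M, ∀ y ∈ M, ∀ v ∈ verts, arc x v → arc v y → v ∈ M

/-- The edge set of the C₃-structure of a tournament: the 3-sets inducing a 3-cycle. -/
def c3Edges {α : Type*} [DecidableEq α] (verts : Finset α) (arc : α → α → Prop) :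
    Set (Finset α) :=
  {e | ∃ x y z, x ∈ verts ∧ y ∈ verts ∧ z ∈ verts ∧
    x ≠ y ∧ y ≠ z ∧ x ≠ z ∧ arc x y ∧ arc y z ∧ arc z x ∧ e = {x, y, z}}

/-- Arc relation of the tournament `T_p` on `{0, …, p-1}`: obtained from the transitive
tournament (arcs `i j` for `i < j`) by reversing all arcs between even and odd vertices. -/
def arcT (i j : ℕ) : Prop :=
  (i < j ∧ i % 2 = j % 2) ∨ (j < i ∧ i % 2 ≠ j % 2)

/-- A 3-hypergraph is circular if its order is odd and it is isomorphic to
`C₃(T_{v(H)})`. -/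
def IsCircular {α : Type*} [DecidableEq α] (verts : Finset α) (edges : Set (Finset α)) : Prop :=
  Odd verts.card ∧ ∃ f : α → ℕ, Set.InjOn f verts ∧
    verts.image f = Finset.range verts.card ∧
    ∀ e : Finset α, e ⊆ verts →
      (e ∈ edges ↔ e.image f ∈ c3Edges (Finset.range verts.card) arcT)


/-!
If `H - {v, u}` is prime but `H - v` is not, a nontrivial module of `H - v` meets
`V \ {v, u}` trivially. So either it is a pair `{u, w}`, and then swapping `u` and `w` is an
isomorphism `H - {v, u} ≅ H - {v, w}`, making `w` a second neighbour of `v` in the primality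
graph; or every edge through `u` also passes through `v`. Along a path component
`C = φ 0, …, φ (m-1)` this gives: `{φ (k-1), φ (k+1)}` is a module of `H - φ k` for every inner
vertex, and every edge through `φ 1` (resp. `φ (m-2)`) contains `φ 0` (resp. `φ (m-1)`).

These modules let an edge slide along the path in steps of two. If the first path vertex of an
edge `e` had odd index, sliding it down to `φ 1` would produce an edge through `φ 1` avoiding
`φ 0`. So that index is even, and, reversing the path (`m` is even), the index of the last path
vertex of `e` is odd. As `e` has three vertices and leaves the path, these two are all of
`e ∩ C`.
-/

open Finset

section Modules
variable {α : Type*} [DecidableEq α]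

theorem IsModule.sdiff_union_mem {X M e : Finset α} {E : Set (Finset α)} (hM : IsModule X E M)
    (he : e ∈ E) {p q : α} (hp : p ∈ e) (hpM : p ∈ M) (hqM : q ∈ M) (hout : (e \ M).Nonempty) :
    e \ {p} ∪ {q} ∈ E := by
  have hpeM : p ∈ e ∩ M := mem_inter.2 ⟨hp, hpM⟩
  obtain ⟨r, -, hr, hexch⟩ := hM.2 e he ⟨p, hpeM⟩ hout
  rw [hr, mem_singleton] at hpeM
  exact hpeM ▸ hexch q hqM

theorem IsModule.inter {X Y M : Finset α} {E : Set (Finset α)}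
    (hM : IsModule X (induceEdges X E) M) (hYX : Y ⊆ X) :
    IsModule Y (induceEdges Y E) (M ∩ Y) := by
  refine ⟨inter_subset_right, fun e ⟨heE, heY⟩ hmeet hout => ?_⟩
  have hinter : e ∩ (M ∩ Y) = e ∩ M := by
    rw [← inter_assoc, inter_right_comm, inter_eq_left.2 heY]
  have hsdiff : e \ (M ∩ Y) = e \ M := by
    rw [sdiff_inter_distrib_right, sdiff_eq_empty_iff_subset.2 heY, union_empty]
  rw [hinter] at hmeet ⊢
  rw [hsdiff] at hout
  obtain ⟨r, hrM, hr, hexch⟩ := hM.2 e ⟨heE, heY.trans hYX⟩ hmeet hout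
  have hre : r ∈ e := mem_of_mem_inter_left (hr ▸ mem_singleton_self r : r ∈ e ∩ M)
  refine ⟨r, mem_inter.2 ⟨hrM, heY hre⟩, hr, fun n hn => ⟨(hexch n (mem_inter.1 hn).1).1, ?_⟩⟩
  exact union_subset (sdiff_subset.trans heY) (singleton_subset_iff.2 (mem_inter.1 hn).2)

theorem IsModule.map {β : Type*} [DecidableEq β] {V M : Finset α} {E : Set (Finset α)}
    (hM : IsModule V E M) (σ : α ↪ β) :
    IsModule (V.map σ) (Finset.map σ '' E) (M.map σ) := by
  refine ⟨map_subset_map.2 hM.1, ?_⟩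
  rintro _ ⟨e, he, rfl⟩ hmeet hout
  rw [← map_inter, map_nonempty] at hmeet
  rw [← Finset.map_sdiff, map_nonempty] at hout
  obtain ⟨r, hrM, hr, hexch⟩ := hM.2 e he hmeet hout
  refine ⟨σ r, mem_map_of_mem σ hrM, by rw [← map_inter, hr, map_singleton], ?_⟩
  intro n' hn'
  obtain ⟨n, hn, rfl⟩ := mem_map.1 hn'
  refine ⟨e \ {r} ∪ {n}, hexch n hn, ?_⟩
  rw [map_union, Finset.map_sdiff, map_singleton, map_singleton]

theorem IsPrime.of_map {β : Type*} [DecidableEq β] {V : Finset α} {E : Set (Finset α)}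
    (σ : α ↪ β) (h : IsPrime (V.map σ) (Finset.map σ '' E)) : IsPrime V E := by
  refine ⟨card_map σ ▸ h.1, fun M hM => ?_⟩
  rcases h.2 _ (hM.map σ) with hM' | hM' | ⟨x, hM'⟩
  · exact Or.inl (map_eq_empty.1 hM')
  · exact Or.inr (Or.inl (map_injective σ hM'))
  · refine Or.inr (Or.inr (card_eq_one.1 ?_))
    rw [← card_map σ, hM', card_singleton]

end Modules

section Hypergraph
variable {α : Type*} [DecidableEq α] {V : Finset α} {E : Set (Finset α)}

theorem Is3Hypergraph.sdiff_union_mem (h3 : Is3Hypergraph V E) {v p q : α}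
    (hmod : IsModule (V.erase v) (induceEdges (V.erase v) E) {p, q}) {e : Finset α}
    (he : e ∈ E) (hv : v ∉ e) (hp : p ∈ e) : e \ {p} ∪ {q} ∈ E := by
  have hout : (e \ {p, q}).Nonempty := by
    have := le_card_sdiff {p, q} e
    have := card_le_two (a := p) (b := q)
    have := (h3 e he).2
    rw [← card_pos]
    omega
  have heV : e ∈ induceEdges (V.erase v) E :=
    ⟨he, fun x hx => mem_erase.2 ⟨fun hxv => hv (hxv ▸ hx), (h3 e he).1 hx⟩⟩
  exact (hmod.sdiff_union_mem heV hp (mem_insert_self p {q})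
    (mem_insert_of_mem (mem_singleton_self q)) hout).1

theorem Finset.map_swap_of_mem_of_notMem {u w : α} {e : Finset α} (hu : u ∈ e) (hw : w ∉ e) :
    e.map (Equiv.swap u w).toEmbedding = e \ {u} ∪ {w} := by
  ext x
  rw [mem_map_equiv, Equiv.symm_swap]
  rcases eq_or_ne x u with rfl | hxu
  · simp [hw, (ne_of_mem_of_not_mem hu hw)]
  rcases eq_or_ne x w with rfl | hxw
  · simp [hu]
  · simp [Equiv.swap_apply_of_ne_of_ne hxu hxw, hxu, hxw]

theorem Is3Hypergraph.map_swap_mem_induceEdges (h3 : Is3Hypergraph V E) {v u w : α}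
    (hmod : IsModule (V.erase v) (induceEdges (V.erase v) E) {u, w}) {e : Finset α}
    (he : e ∈ induceEdges (V \ {v, w}) E) :
    e.map (Equiv.swap u w).toEmbedding ∈ induceEdges (V \ {v, u}) E := by
  obtain ⟨heE, heV⟩ := he
  have hw : w ∉ e := fun hw => by simpa using heV hw
  have hwV : w ∈ V.erase v := hmod.1 (mem_insert_of_mem (mem_singleton_self w))
  by_cases hu : u ∈ e
  · rw [map_swap_of_mem_of_notMem hu hw]
    refine ⟨h3.sdiff_union_mem hmod heE (fun hv => by simpa using heV hv) hu, ?_⟩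
    refine union_subset (fun x hx => ?_) (singleton_subset_iff.2 ?_)
    · have := heV (mem_sdiff.1 hx).1
      simp only [mem_sdiff, mem_insert, mem_singleton] at hx this ⊢
      tauto
    · simp only [mem_sdiff, mem_insert, mem_singleton, mem_erase] at hwV ⊢
      exact ⟨hwV.2, fun h => h.elim hwV.1 (fun hwu => hw (hwu ▸ hu))⟩
  · have hfix : e.map (Equiv.swap u w).toEmbedding = e := by
      rw [map_eq_image, Equiv.coe_toEmbedding, image_congr (g := id), image_id]
      intro x hx
      exact Equiv.swap_apply_of_ne_of_ne (ne_of_mem_of_not_mem hx hu)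
        (ne_of_mem_of_not_mem hx hw)
    rw [hfix]
    refine ⟨heE, fun x hx => ?_⟩
    have := heV hx
    simp only [mem_sdiff, mem_insert, mem_singleton] at this ⊢
    exact ⟨this.1, by rintro (h | rfl); exacts [this.2 (Or.inl h), hu hx]⟩

theorem Is3Hypergraph.isPrime_sdiff_pair_of_isModule (h3 : Is3Hypergraph V E) {v u w : α}
    (hmod : IsModule (V.erase v) (induceEdges (V.erase v) E) {u, w})
    (hP : IsPrime (V \ {v, u}) (induceEdges (V \ {v, u}) E)) :
    IsPrime (V \ {v, w}) (induceEdges (V \ {v, w}) E) := by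
  set σ := (Equiv.swap u w).toEmbedding
  have hu : u ∈ V.erase v := hmod.1 (mem_insert_self u {w})
  have hw : w ∈ V.erase v := hmod.1 (mem_insert_of_mem (mem_singleton_self w))
  rw [mem_erase] at hu hw
  have hverts : (V \ {v, w}).map σ = V \ {v, u} := by
    ext x
    rw [mem_map_equiv, Equiv.symm_swap]
    rcases eq_or_ne x u with rfl | hxu
    · simp [hw.1, hw.2]
    rcases eq_or_ne x w with rfl | hxw
    · simp [hu.1, hu.2, hw.1, hw.2, hxu, Ne.symm hxu]
    · simp [Equiv.swap_apply_of_ne_of_ne hxu hxw, hxu, hxw]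
  have hedges : Finset.map σ '' induceEdges (V \ {v, w}) E = induceEdges (V \ {v, u}) E := by
    refine Set.Subset.antisymm ?_ fun e he => ⟨e.map σ, ?_, ?_⟩
    · rintro _ ⟨e, he, rfl⟩
      exact h3.map_swap_mem_induceEdges hmod he
    · rw [show σ = (Equiv.swap w u).toEmbedding by rw [Equiv.swap_comm]]
      exact h3.map_swap_mem_induceEdges (pair_comm u w ▸ hmod) he
    · ext x
      simp [σ]
  exact IsPrime.of_map σ (hverts ▸ hedges ▸ hP)

theorem Is3Hypergraph.exists_isModule_pair_or_forall_mem (h3 : Is3Hypergraph V E) {v u : α}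
    (hP : IsPrime (V \ {v, u}) (induceEdges (V \ {v, u}) E))
    (hnP : ¬ IsPrime (V.erase v) (induceEdges (V.erase v) E)) :
    (∃ w, w ≠ u ∧ IsModule (V.erase v) (induceEdges (V.erase v) E) {u, w}) ∨
      ∀ e ∈ E, u ∈ e → v ∈ e := by
  have hY : V \ {v, u} = (V.erase v).erase u := by
    ext x
    simp only [mem_sdiff, mem_insert, mem_singleton, mem_erase]
    tauto
  rw [hY] at hP
  obtain ⟨M, hM, hM0, hMV, hM1⟩ : ∃ M, IsModule (V.erase v) (induceEdges (V.erase v) E) M ∧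
      M ≠ ∅ ∧ M ≠ V.erase v ∧ ∀ x, M ≠ {x} := by
    simpa [IsPrime, hP.1.trans (card_le_card (erase_subset u _))] using hnP
  have hMu : M ∩ (V.erase v).erase u = M.erase u := by
    rw [inter_erase, inter_eq_left.2 hM.1]
  rcases hP.2 _ (hM.inter (erase_subset u _)) with h | h | ⟨w, h⟩ <;> rw [hMu] at h
  · rcases erase_eq_empty_iff M u |>.1 h with h | h
    exacts [absurd h hM0, absurd h (hM1 u)]
  · have huM : u ∉ M := fun huM => hMV (by rw [← insert_erase huM, h, insert_erase (hM.1 huM)])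
    refine Or.inr fun e he hue => by_contra fun hve => ?_
    have heV : e ⊆ V.erase v := fun x hx => mem_erase.2 ⟨fun hxv => hve (hxv ▸ hx), (h3 e he).1 hx⟩
    have hcard : (e ∩ M).card = 2 := by
      rw [← erase_eq_of_notMem huM, h, inter_erase, inter_eq_left.2 heV,
        card_erase_of_mem hue, (h3 e he).2]
    obtain ⟨r, -, hr, -⟩ := hM.2 e ⟨he, heV⟩ (card_pos.1 (by omega)) ⟨u, mem_sdiff.2 ⟨hue, huM⟩⟩
    rw [hr, card_singleton] at hcard
    omega
  · have huM : u ∈ M := by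
      by_contra huM
      exact hM1 w (by rwa [erase_eq_of_notMem huM] at h)
    have hwM : w ∈ M.erase u := by rw [h]; exact mem_singleton_self w
    exact Or.inl ⟨w, (mem_erase.1 hwM).1, by rwa [← h, insert_erase huM]⟩

theorem not_isPrime_sdiff_pair_of_forall_mem (h5 : 5 ≤ V.card) {x y z : α} (hz : z ∈ V)
    (hyz : y ≠ z) (hxz : x ≠ z) (hE : ∀ e ∈ E, z ∈ e → y ∈ e) :
    ¬ IsPrime (V \ {y, x}) (induceEdges (V \ {y, x}) E) := by
  have hU := le_card_sdiff {y, x} V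
  have := card_le_two (a := y) (b := x)
  set U := V \ {y, x}
  have hzU : z ∈ U := by simp [U, hz, hyz.symm, hxz.symm]
  have hcard : 2 ≤ (U.erase z).card := by
    rw [card_erase_of_mem hzU]
    omega
  -- `z` is isolated in `H - {x, y}`
  have hmod : IsModule U (induceEdges U E) (U.erase z) := by
    refine ⟨erase_subset z U, fun e ⟨heE, heU⟩ _ ⟨t, ht⟩ => ?_⟩
    obtain ⟨hte, htz⟩ := mem_sdiff.1 ht
    obtain rfl : t = z := by_contra fun h => htz (mem_erase.2 ⟨h, heU hte⟩)
    simpa [U] using heU (hE e heE hte)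
  intro hP
  rcases hP.2 _ hmod with h | h | ⟨t, h⟩
  · simp [h] at hcard
  · exact notMem_erase z U (by rw [h]; exact hzU)
  · simp [h] at hcard

theorem IsCritical.exists_primAdj_isModule_pair_or_forall_mem (h3 : Is3Hypergraph V E)
    (hc : IsCritical V E) {v u : α} (hvu : PrimAdj V E v u) :
    (∃ w, w ≠ u ∧ PrimAdj V E v w ∧ IsModule (V.erase v) (induceEdges (V.erase v) E) {u, w}) ∨
      ∀ e ∈ E, u ∈ e → v ∈ e := by
  obtain ⟨-, hv, -, hP⟩ := hvu
  refine (h3.exists_isModule_pair_or_forall_mem hP (hc.2 v hv)).imp_left ?_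
  rintro ⟨w, hwu, hmod⟩
  have hw := mem_erase.1 (hmod.1 (mem_insert_of_mem (mem_singleton_self w)))
  exact ⟨w, hwu, ⟨hw.1.symm, hv, hw.2, h3.isPrime_sdiff_pair_of_isModule hmod hP⟩, hmod⟩

theorem IsCritical.forall_mem_of_forall_primAdj_eq (h3 : Is3Hypergraph V E)
    (hc : IsCritical V E) {v u : α} (hvu : PrimAdj V E v u)
    (hnbr : ∀ w, PrimAdj V E v w → w = u) : ∀ e ∈ E, u ∈ e → v ∈ e :=
  (hc.exists_primAdj_isModule_pair_or_forall_mem h3 hvu).resolve_left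
    fun ⟨w, hwu, hvw, _⟩ => hwu (hnbr w hvw)

theorem IsCritical.isModule_pair_of_forall_primAdj (h3 : Is3Hypergraph V E)
    (hc : IsCritical V E) (h5 : 5 ≤ V.card) {v u x : α} (hvu : PrimAdj V E v u)
    (hvx : PrimAdj V E v x) (hxu : x ≠ u) (hnbr : ∀ w, PrimAdj V E v w → w = u ∨ w = x) :
    IsModule (V.erase v) (induceEdges (V.erase v) E) {u, x} := by
  rcases hc.exists_primAdj_isModule_pair_or_forall_mem h3 hvu with ⟨w, hwu, hvw, hmod⟩ | hall
  · rwa [(hnbr w hvw).resolve_left hwu] at hmod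
  · exact absurd hvx.2.2.2 (not_isPrime_sdiff_pair_of_forall_mem h5 hvu.2.2.1 hvu.1 hxu hall)

end Hypergraph

section ModularPath
variable {α : Type*} [DecidableEq α] {V : Finset α} {E : Set (Finset α)} {m : ℕ} {φ : ℕ → α}

structure IsModularPath (V : Finset α) (E : Set (Finset α)) (m : ℕ) (φ : ℕ → α) : Prop where
  injOn : Set.InjOn φ (Set.Iio m)
  isModule : ∀ k, k + 2 < m →
    IsModule (V.erase (φ (k + 1))) (induceEdges (V.erase (φ (k + 1))) E) {φ k, φ (k + 2)}
  first : ∀ e ∈ E, φ 1 ∈ e → φ 0 ∈ e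
  last : ∀ e ∈ E, φ (m - 2) ∈ e → φ (m - 1) ∈ e

theorem IsModularPath.reverse (hp : IsModularPath V E m φ) :
    IsModularPath V E m (fun i => φ (m - 1 - i)) where
  injOn i hi j hj hij := by
    simp only [Set.mem_Iio] at hi hj
    have := hp.injOn (Set.mem_Iio.2 (by omega : m - 1 - i < m))
      (Set.mem_Iio.2 (by omega : m - 1 - j < m)) hij
    omega
  isModule k hk := by
    have hmod := hp.isModule (m - 3 - k) (by omega)
    rwa [show m - 3 - k + 1 = m - 1 - (k + 1) by omega, show m - 3 - k = m - 1 - (k + 2) by omega,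
      show m - 1 - (k + 2) + 2 = m - 1 - k by omega, pair_comm] at hmod
  first e he := by
    rw [Nat.sub_sub, Nat.sub_zero]
    exact hp.last e he
  last e he := by
    rcases le_or_gt 2 m with hm | hm
    · rw [show m - 1 - (m - 2) = 1 by omega, Nat.sub_self]
      exact hp.first e he
    · simp [show m - 1 - (m - 2) = 0 by omega]

theorem IsModularPath.even_of_forall_lt_notMem (h3 : Is3Hypergraph V E)
    (hp : IsModularPath V E m φ) {e : Finset α} (he : e ∈ E) {a : ℕ} (ha : a < m)
    (hae : φ a ∈ e) (hlt : ∀ j < a, φ j ∉ e) : Even a := by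
  rw [← Nat.not_odd_iff_even]
  rintro ⟨n, rfl⟩
  induction n generalizing e with
  | zero => exact hlt 0 (by omega) (hp.first e he hae)
  | succ n ih =>
    have hmod := hp.isModule (2 * n + 1) (by omega)
    rw [show 2 * n + 1 + 2 = 2 * (n + 1) + 1 by ring, pair_comm] at hmod
    have he' := h3.sdiff_union_mem hmod he (hlt _ (by omega)) hae
    refine ih he' (by omega) (by simp) fun j hj hje => ?_
    have hj' : φ j ≠ φ (2 * n + 1) := fun h => by
      have := hp.injOn (Set.mem_Iio.2 (by omega : j < m)) (Set.mem_Iio.2 (by omega)) h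
      omega
    simp only [mem_union, mem_sdiff, mem_singleton, hj', or_false] at hje
    exact hlt j (by omega) hje.1

theorem IsModularPath.odd_of_forall_gt_notMem (h3 : Is3Hypergraph V E)
    (hp : IsModularPath V E m φ) (hm : Even m) {e : Finset α} (he : e ∈ E) {b : ℕ} (hb : b < m)
    (hbe : φ b ∈ e) (hgt : ∀ j, b < j → j < m → φ j ∉ e) : Odd b := by
  obtain ⟨k, hk⟩ := hp.reverse.even_of_forall_lt_notMem h3 he (a := m - 1 - b) (by omega)
    (by rwa [show m - 1 - (m - 1 - b) = b by omega]) fun j hj => hgt _ (by omega) (by omega)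
  obtain ⟨l, hl⟩ := hm
  exact ⟨l - k - 1, by omega⟩

theorem IsModularPath.exists_inter_eq_pair (h3 : Is3Hypergraph V E) (hp : IsModularPath V E m φ)
    (hm : Even m) {e : Finset α} (he : e ∈ E) (hmeet : (e ∩ (range m).image φ).Nonempty)
    (hout : (e \ (range m).image φ).Nonempty) :
    ∃ i j, i ≤ j ∧ 2 * j + 1 < m ∧ e ∩ (range m).image φ = {φ (2 * i), φ (2 * j + 1)} := by
  set I := (range m).filter (φ · ∈ e)
  have hmemI : ∀ j, j ∈ I ↔ j < m ∧ φ j ∈ e := by simp [I]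
  have hI : I.Nonempty := by
    obtain ⟨_, hx⟩ := hmeet
    obtain ⟨hxe, a, ha, rfl⟩ := mem_inter.1 hx |>.imp_right mem_image.1
    exact ⟨a, (hmemI a).2 ⟨mem_range.1 ha, hxe⟩⟩
  obtain ⟨ham, hae⟩ := (hmemI _).1 (I.min'_mem hI)
  obtain ⟨hbm, hbe⟩ := (hmemI _).1 (I.max'_mem hI)
  have hab : I.min' hI ≤ I.max' hI := I.min'_le _ (I.max'_mem hI)
  obtain ⟨i, hi⟩ := hp.even_of_forall_lt_notMem h3 he ham hae fun j hj hje =>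
    (I.min'_le j ((hmemI j).2 ⟨by omega, hje⟩)).not_gt hj
  obtain ⟨j, hj⟩ := hp.odd_of_forall_gt_notMem h3 hm he hbm hbe fun j hj hjm hje =>
    (I.le_max' j ((hmemI j).2 ⟨hjm, hje⟩)).not_gt hj
  rw [hi, ← two_mul] at ham hae
  rw [hj] at hbm hbe
  have hne : φ (2 * i) ≠ φ (2 * j + 1) := fun h => by
    have := hp.injOn (Set.mem_Iio.2 ham) (Set.mem_Iio.2 hbm) h
    omega
  have hcard : (e ∩ (range m).image φ).card ≤ 2 := by
    have := card_sdiff_add_card_inter e ((range m).image φ)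
    have := card_pos.2 hout
    have := (h3 e he).2
    omega
  have hsub : {φ (2 * i), φ (2 * j + 1)} ⊆ e ∩ (range m).image φ := by
    simp only [insert_subset_iff, singleton_subset_iff, mem_inter, mem_image, mem_range]
    exact ⟨⟨hae, _, ham, rfl⟩, hbe, _, hbm, rfl⟩
  exact ⟨i, j, by omega, hbm, (eq_of_subset_of_card_le hsub (by rwa [card_pair hne])).symm⟩

theorem IsCritical.isModularPath (h3 : Is3Hypergraph V E) (hc : IsCritical V E)
    (h5 : 5 ≤ V.card) (hm : 2 ≤ m) (hinj : Set.InjOn φ (Set.Iio m))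
    (hpath : ∀ i < m, ∀ j < m, (PrimAdj V E (φ i) (φ j) ↔ (j = i + 1 ∨ i = j + 1)))
    (hclosed : ∀ i < m, ∀ w, PrimAdj V E (φ i) w → ∃ j < m, w = φ j) :
    IsModularPath V E m φ := by
  have hnbr : ∀ i < m, ∀ w, PrimAdj V E (φ i) w →
      ∃ j < m, (j = i + 1 ∨ i = j + 1) ∧ w = φ j := by
    intro i hi w hw
    obtain ⟨j, hj, rfl⟩ := hclosed i hi w hw
    exact ⟨j, hj, (hpath i hi j hj).1 hw, rfl⟩
  refine ⟨hinj, fun k hk => ?_, ?_, ?_⟩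
  · refine hc.isModule_pair_of_forall_primAdj h3 h5 ((hpath _ (by omega) _ (by omega)).2 (by omega))
      ((hpath _ (by omega) _ (by omega)).2 (by omega)) (fun h => ?_) fun w hw => ?_
    · have := hinj (Set.mem_Iio.2 hk) (Set.mem_Iio.2 (by omega : k < m)) h
      omega
    · obtain ⟨j, -, hj, rfl⟩ := hnbr (k + 1) (by omega) w hw
      rcases hj with rfl | hj
      · exact Or.inr rfl
      · exact Or.inl (by rw [show j = k by omega])
  · refine hc.forall_mem_of_forall_primAdj_eq h3 ((hpath 0 (by omega) 1 (by omega)).2 (by omega))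
      fun w hw => ?_
    obtain ⟨j, -, hj, rfl⟩ := hnbr 0 (by omega) w hw
    rw [show j = 1 by omega]
  · refine hc.forall_mem_of_forall_primAdj_eq h3
      ((hpath (m - 1) (by omega) (m - 2) (by omega)).2 (by omega)) fun w hw => ?_
    obtain ⟨j, hjm, hj, rfl⟩ := hnbr (m - 1) (by omega) w hw
    rw [show j = m - 2 by omega]

end ModularPath

theorem even_path_component_meets_edges_in_pair_general {α : Type*} [DecidableEq α]
    (verts : Finset α) (edges : Set (Finset α)) (h3 : Is3Hypergraph verts edges)
    (hc : IsCritical verts edges) (h5 : 5 ≤ verts.card)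
    (m : ℕ) (φ : ℕ → α) (hinj : Set.InjOn φ (Set.Iio m))
    (hpath : ∀ i < m, ∀ j < m, (PrimAdj verts edges (φ i) (φ j) ↔ (j = i + 1 ∨ i = j + 1)))
    (hclosed : ∀ i < m, ∀ w, PrimAdj verts edges (φ i) w → ∃ j < m, w = φ j)
    (hmeven : Even m) :
    ∀ e ∈ edges, (e ∩ (Finset.range m).image φ).Nonempty →
      (e \ (Finset.range m).image φ).Nonempty →
      ∃ i j, i ≤ j ∧ 2 * j + 1 < m ∧
        e ∩ (Finset.range m).image φ = {φ (2 * i), φ (2 * j + 1)} := by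
  intro e he hmeet hout
  have hm : 2 ≤ m := by
    obtain ⟨x, hx⟩ := hmeet
    obtain ⟨a, ha, -⟩ := mem_image.1 (mem_inter.1 hx).2
    obtain ⟨k, rfl⟩ := hmeven
    simp only [mem_range] at ha
    omega
  exact (hc.isModularPath h3 h5 hm hinj hpath hclosed).exists_inter_eq_pair h3 hmeven he hmeet hout

theorem even_path_component_meets_edges_in_pair {α : Type*} [DecidableEq α]
    (verts : Finset α) (edges : Set (Finset α)) (h3 : Is3Hypergraph verts edges)
    (hc : IsCritical verts edges) (h5 : 5 ≤ verts.card)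
    (hnc : ¬ IsCircular verts edges)
    (m : ℕ) (φ : ℕ → α) (hinj : Set.InjOn φ (Set.Iio m))
    (hsub : (Finset.range m).image φ ⊆ verts)
    (hpath : ∀ i < m, ∀ j < m, (PrimAdj verts edges (φ i) (φ j) ↔ (j = i + 1 ∨ i = j + 1)))
    (hclosed : ∀ i < m, ∀ w, PrimAdj verts edges (φ i) w → ∃ j < m, w = φ j)
    (hm0 : 0 < m) (hmeven : Even m) :
    ∀ e ∈ edges, (e ∩ (Finset.range m).image φ).Nonempty →
      (e \ (Finset.range m).image φ).Nonempty →
      ∃ i j, i ≤ j ∧ 2 * j + 1 < m ∧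
        e ∩ (Finset.range m).image φ = {φ (2 * i), φ (2 * j + 1)} :=
  even_path_component_meets_edges_in_pair_general verts edges h3 hc h5 m φ hinj hpath hclosed hmeven
end

section
/- Consider a graph Γ all of whose components are paths, a {2,3}-hypergraph ℍ on the set of components of Γ satisfying the construction conditions, and the associated 3-hypergraph Γ•ℍ. If ℂ is a connected component of ℍ, then the union of the vertex sets of the elements of V(ℂ) is a module of Γ•ℍ, and so is its complement in V(Γ). -/
/-- The vertex set of the component `c` of `Γ`: it is the path `P_{n c}`, identified with
`{c} × {0, …, n c - 1}`, the path isomorphism `φ_c` being `m ↦ (c, m)`. -/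
def compVerts {ι : Type*} [DecidableEq ι] (n : ι → ℕ) (c : ι) : Finset (ι × ℕ) :=
  (Finset.range (n c)).image fun m => (c, m)

/-- The vertex set of `Γ`: the disjoint union of all components. -/
def bVerts {ι : Type*} [Fintype ι] [DecidableEq ι] (n : ι → ℕ) : Finset (ι × ℕ) :=
  Finset.univ.biUnion (compVerts n)

/-- The conditions on the edges of the {2,3}-hypergraph `ℍ` on the set of components:
edges have size 2 or 3, size-2 edges consist of one even-order and one odd-order
component, and size-3 edges consist of three odd-order components. -/
def GoodHEdges {ι : Type*} (n : ι → ℕ) (Hedges : Set (Finset ι)) : Prop :=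
  ∀ ε ∈ Hedges,
    (ε.card = 2 ∧ (∃ C ∈ ε, Even (n C)) ∧ ∃ D ∈ ε, Odd (n D)) ∨
    (ε.card = 3 ∧ ∀ C ∈ ε, Odd (n C))

/-- The edge set of the 3-hypergraph `Γ•ℍ`. -/
def bEdges {ι : Type*} [DecidableEq ι] (n : ι → ℕ) (Hedges : Set (Finset ι)) : Set (Finset (ι × ℕ)) :=
  {e | (∃ C, Odd (n C) ∧ 3 ≤ n C ∧ ∃ i j k, i ≤ j ∧ j < k ∧ 2 * k ≤ n C - 1 ∧
          e = {(C, 2 * i), (C, 2 * j + 1), (C, 2 * k)}) ∨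
       (∃ C D, C ≠ D ∧ Even (n C) ∧ Odd (n D) ∧ ({C, D} : Finset ι) ∈ Hedges ∧
          ∃ i j k, i ≤ j ∧ 2 * j + 1 ≤ n C - 1 ∧ 2 * k ≤ n D - 1 ∧
          e = {(C, 2 * i), (C, 2 * j + 1), (D, 2 * k)}) ∨
       (∃ I J K, I ≠ J ∧ J ≠ K ∧ I ≠ K ∧
          Odd (n I) ∧ Odd (n J) ∧ Odd (n K) ∧ ({I, J, K} : Finset ι) ∈ Hedges ∧
          ∃ i j k, 2 * i ≤ n I - 1 ∧ 2 * j ≤ n J - 1 ∧ 2 * k ≤ n K - 1 ∧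
          e = {(I, 2 * i), (J, 2 * j), (K, 2 * k)})}

/-- Two components are linked in `ℍ` when some edge of `ℍ` contains both. -/
def HStep {ι : Type*} (Hedges : Set (Finset ι)) (C D : ι) : Prop :=
  ∃ ε ∈ Hedges, C ∈ ε ∧ D ∈ ε

/-- A subset of the components is a module of the {2,3}-hypergraph `ℍ` if it is
simultaneously a module of the graph of 2-edges and of the 3-hypergraph of 3-edges. -/
def HModule {ι : Type*} [DecidableEq ι] [Fintype ι] (Hedges : Set (Finset ι))
    (S : Finset ι) : Prop :=
  IsModule Finset.univ {ε ∈ Hedges | ε.card = 2} S ∧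
  IsModule Finset.univ {ε ∈ Hedges | ε.card = 3} S

lemma mem_bM {ι : Type*} [DecidableEq ι] (n : ι → ℕ) (S : Finset ι)
    (c : ι) (m : ℕ) : (c, m) ∈ S.biUnion (compVerts n) ↔ c ∈ S ∧ m < n c := by
  simp only [Finset.mem_biUnion, compVerts, Finset.mem_image, Finset.mem_range]
  constructor
  · rintro ⟨a, ha, b, hb, h⟩
    cases h; exact ⟨ha, hb⟩
  · rintro ⟨hc, hm⟩; exact ⟨c, hc, m, hm, rfl⟩

lemma mem_bV {ι : Type*} [Fintype ι] [DecidableEq ι] (n : ι → ℕ)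
    (c : ι) (m : ℕ) : (c, m) ∈ bVerts n ↔ m < n c := by
  simp only [bVerts, Finset.mem_biUnion, Finset.mem_univ, true_and, compVerts,
    Finset.mem_image, Finset.mem_range]
  constructor
  · rintro ⟨a, b, hb, h⟩; cases h; exact hb
  · intro hm; exact ⟨c, m, hm, rfl⟩

theorem component_union_is_module {ι : Type*} [Fintype ι] [DecidableEq ι]
    (n : ι → ℕ) (hn : ∀ c, 0 < n c) (Hedges : Set (Finset ι))
    (hgood : GoodHEdges n Hedges)
    (S : Finset ι)
    (hclosed : ∀ ε ∈ Hedges, (∃ C ∈ ε, C ∈ S) → ∀ D ∈ ε, D ∈ S)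
    (hconn : ∀ C ∈ S, ∀ D ∈ S, Relation.ReflTransGen (HStep Hedges) C D) :
    IsModule (bVerts n) (bEdges n Hedges) (S.biUnion (compVerts n)) ∧
      IsModule (bVerts n) (bEdges n Hedges) (bVerts n \ S.biUnion (compVerts n)) := by
  set M := S.biUnion (compVerts n) with hMdef
  have hMsub : M ⊆ bVerts n := by
    intro x hx
    obtain ⟨c, m⟩ := x
    rw [mem_bM] at hx
    rw [mem_bV]
    exact hx.2
  have key : ∀ e ∈ bEdges n Hedges, e ⊆ bVerts n ∧ (e ⊆ M ∨ ∀ x ∈ e, x ∉ M) := by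
    intro e he
    rcases he with ⟨C, hodd, h3, i, j, k, hij, hjk, hk, rfl⟩ |
      ⟨C, D, hCD, hCe, hDo, hH, i, j, k, hij, hj, hk, rfl⟩ |
      ⟨I, J, K, hIJ, hJK, hIK, hI, hJ, hK, hH, i, j, k, hi, hj, hk, rfl⟩
    · have hnC := hn C
      have b1 : 2 * i < n C := by omega
      have b2 : 2 * j + 1 < n C := by omega
      have b3 : 2 * k < n C := by omega
      constructor
      · intro x hx
        simp only [Finset.mem_insert, Finset.mem_singleton] at hx
        rcases hx with rfl | rfl | rfl <;> rw [mem_bV] <;> assumption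
      · by_cases hCS : C ∈ S
        · left; intro x hx
          simp only [Finset.mem_insert, Finset.mem_singleton] at hx
          rcases hx with rfl | rfl | rfl <;> rw [mem_bM] <;> exact ⟨hCS, by assumption⟩
        · right; intro x hx
          simp only [Finset.mem_insert, Finset.mem_singleton] at hx
          rcases hx with rfl | rfl | rfl <;> rw [mem_bM] <;> exact fun h => hCS h.1
    · have hnC := hn C
      have hnD := hn D
      have b1 : 2 * i < n C := by omega
      have b2 : 2 * j + 1 < n C := by omega
      have b3 : 2 * k < n D := by omega
      have hCin : C ∈ ({C, D} : Finset ι) := by simp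
      have hDin : D ∈ ({C, D} : Finset ι) := by simp
      constructor
      · intro x hx
        simp only [Finset.mem_insert, Finset.mem_singleton] at hx
        rcases hx with rfl | rfl | rfl <;> rw [mem_bV] <;> assumption
      · by_cases hCS : C ∈ S
        · have hDS : D ∈ S := hclosed _ hH ⟨C, hCin, hCS⟩ D hDin
          left; intro x hx
          simp only [Finset.mem_insert, Finset.mem_singleton] at hx
          rcases hx with rfl | rfl | rfl <;> rw [mem_bM]
          exacts [⟨hCS, b1⟩, ⟨hCS, b2⟩, ⟨hDS, b3⟩]
        · have hDS : D ∉ S := fun h => hCS (hclosed _ hH ⟨D, hDin, h⟩ C hCin)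
          right; intro x hx
          simp only [Finset.mem_insert, Finset.mem_singleton] at hx
          rcases hx with rfl | rfl | rfl <;> rw [mem_bM]
          exacts [fun h => hCS h.1, fun h => hCS h.1, fun h => hDS h.1]
    · have hnI := hn I
      have hnJ := hn J
      have hnK := hn K
      have b1 : 2 * i < n I := by omega
      have b2 : 2 * j < n J := by omega
      have b3 : 2 * k < n K := by omega
      have hIin : I ∈ ({I, J, K} : Finset ι) := by simp
      have hJin : J ∈ ({I, J, K} : Finset ι) := by simp
      have hKin : K ∈ ({I, J, K} : Finset ι) := by simp
      constructor
      · intro x hx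
        simp only [Finset.mem_insert, Finset.mem_singleton] at hx
        rcases hx with rfl | rfl | rfl <;> rw [mem_bV] <;> assumption
      · by_cases hIS : I ∈ S
        · have hJS : J ∈ S := hclosed _ hH ⟨I, hIin, hIS⟩ J hJin
          have hKS : K ∈ S := hclosed _ hH ⟨I, hIin, hIS⟩ K hKin
          left; intro x hx
          simp only [Finset.mem_insert, Finset.mem_singleton] at hx
          rcases hx with rfl | rfl | rfl <;> rw [mem_bM]
          exacts [⟨hIS, b1⟩, ⟨hJS, b2⟩, ⟨hKS, b3⟩]
        · have hJS : J ∉ S := fun h => hIS (hclosed _ hH ⟨J, hJin, h⟩ I hIin)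
          have hKS : K ∉ S := fun h => hIS (hclosed _ hH ⟨K, hKin, h⟩ I hIin)
          right; intro x hx
          simp only [Finset.mem_insert, Finset.mem_singleton] at hx
          rcases hx with rfl | rfl | rfl <;> rw [mem_bM]
          exacts [fun h => hIS h.1, fun h => hJS h.1, fun h => hKS h.1]
  constructor
  · refine ⟨hMsub, fun e he h1 h2 => absurd h2 ?_⟩
    obtain ⟨x, hxe, hxM⟩ := h1.imp fun x hx => Finset.mem_inter.mp hx
    rcases (key e he).2 with hsub | hdisj
    · rintro ⟨y, hy⟩
      rw [Finset.mem_sdiff] at hy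
      exact hy.2 (hsub hy.1)
    · exact absurd hxM (hdisj x hxe)
  · refine ⟨Finset.sdiff_subset, fun e he h1 h2 => absurd h1 ?_⟩
    obtain ⟨hesub, hdich⟩ := key e he
    obtain ⟨y, hye, hyn⟩ := h2.imp fun y hy => Finset.mem_sdiff.mp hy
    have hyM : y ∈ M := by
      by_contra hyM
      exact hyn (Finset.mem_sdiff.mpr ⟨hesub hye, hyM⟩)
    rcases hdich with hsub | hdisj
    · rintro ⟨x, hx⟩
      rw [Finset.mem_inter, Finset.mem_sdiff] at hx
      exact hx.2.2 (hsub hx.1)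
    · exact absurd hyM (hdisj y hye)
end

section
/- With Γ, ℍ and Γ•ℍ as in the construction: for every edge ε of ℍ, the subhypergraph of Γ•ℍ induced by the union of the vertex sets of the components in ε is prime. -/
section PrimeProof

set_option linter.unusedSectionVars false
variable {ι : Type*} [Fintype ι] [DecidableEq ι] {n : ι → ℕ} {Hedges : Set (Finset ι)}

lemma mem_bUnion_compVerts {ε : Finset ι} {X : ι} {m : ℕ} :
    (X, m) ∈ ε.biUnion (compVerts n) ↔ X ∈ ε ∧ m < n X := by
  simp only [Finset.mem_biUnion, compVerts, Finset.mem_image, Finset.mem_range, Prod.mk.injEq]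
  constructor
  · rintro ⟨a, ha, b, hb, rfl, rfl⟩; exact ⟨ha, hb⟩
  · rintro ⟨h1, h2⟩; exact ⟨X, h1, m, h2, rfl, rfl⟩

lemma card_of_bEdges {e : Finset (ι × ℕ)} (he : e ∈ bEdges n Hedges) : e.card = 3 := by
  rcases he with ⟨C, hodd, h3, i, j, k, hij, hjk, hk, rfl⟩ |
    ⟨C, D, hCD, hC, hD, hH, i, j, k, hij, hj, hk, rfl⟩ |
    ⟨I, J, K, hIJ, hJK, hIK, _, _, _, _, i, j, k, _, _, _, rfl⟩
  · rw [Finset.card_eq_three]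
    refine ⟨_, _, _, ?_, ?_, ?_, rfl⟩ <;> simp [Prod.ext_iff] <;> omega
  · rw [Finset.card_eq_three]
    refine ⟨_, _, _, ?_, ?_, ?_, rfl⟩ <;> simp [Prod.ext_iff, hCD] <;> omega
  · rw [Finset.card_eq_three]
    refine ⟨_, _, _, ?_, ?_, ?_, rfl⟩ <;> simp [Prod.ext_iff, hIJ, hJK, hIK]

/-- `mod_rule1`: an edge with two elements of the module is contained in the module. -/
lemma mod_rule1 {α : Type*} [DecidableEq α] {V : Finset α} {E : Set (Finset α)} {M : Finset α}
    (hM : IsModule V E M) {e : Finset α} (he : e ∈ E) {u v : α}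
    (huM : u ∈ M) (hvM : v ∈ M) (hu : u ∈ e) (hv : v ∈ e) (huv : u ≠ v) : e ⊆ M := by
  by_contra h
  obtain ⟨m, _, hsing, _⟩ := hM.2 e he ⟨u, Finset.mem_inter.mpr ⟨hu, huM⟩⟩
    (by rw [Finset.sdiff_nonempty]; exact h)
  have h1 : u = m := by
    have := Finset.mem_inter.mpr ⟨hu, huM⟩; rw [hsing] at this; simpa using this
  have h2 : v = m := by
    have := Finset.mem_inter.mpr ⟨hv, hvM⟩; rw [hsing] at this; simpa using this
  exact huv (h1.trans h2.symm)

/-- `mod_rule2`: if `{m,p,q}` is an edge with `m,x ∈ M` and the swap `{x,p,q}` is not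
an edge, then `p ∈ M` or `q ∈ M`. -/
lemma mod_rule2 {α : Type*} [DecidableEq α] {V : Finset α} {E : Set (Finset α)} {M : Finset α}
    (hM : IsModule V E M) {e : Finset α} {m p q x : α}
    (he : e ∈ E) (hm : m ∈ M) (hx : x ∈ M) (heq : e = {m, p, q})
    (hmp : m ≠ p) (hmq : m ≠ q) (hswap : ({x, p, q} : Finset α) ∉ E) :
    p ∈ M ∨ q ∈ M := by
  by_contra h
  push_neg at h
  obtain ⟨hp, hq⟩ := h
  have hme : m ∈ e := by rw [heq]; simp
  have hpe : p ∈ e := by rw [heq]; simp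
  obtain ⟨m', hm'M, hsing, hall⟩ := hM.2 e he ⟨m, Finset.mem_inter.mpr ⟨hme, hm⟩⟩
    ⟨p, Finset.mem_sdiff.mpr ⟨hpe, hp⟩⟩
  have hmm' : m = m' := by
    have := Finset.mem_inter.mpr ⟨hme, hm⟩; rw [hsing] at this; simpa using this
  subst hmm'
  have := hall x hx
  have hcompute : (e \ {m}) ∪ {x} = ({x, p, q} : Finset α) := by
    subst heq; ext z
    simp only [Finset.mem_union, Finset.mem_sdiff, Finset.mem_insert, Finset.mem_singleton]
    constructor
    · rintro (⟨(rfl | rfl | rfl), hz⟩ | rfl) <;> tauto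
    · rintro (rfl | rfl | rfl) <;> tauto
  rw [hcompute] at this
  exact hswap this

/-- No edge contains a vertex of an odd-order component with odd coordinate together with a
vertex of another component. -/
lemma ne_odd_cross {e : Finset (ι × ℕ)} (he : e ∈ bEdges n Hedges)
    {X Y : ι} {x y : ℕ} (hx : (X, x) ∈ e) (hy : (Y, y) ∈ e) (hXY : X ≠ Y)
    (hxo : x % 2 = 1) (hnX : Odd (n X)) : False := by
  rcases he with ⟨C, hodd, h3, i, j, k, hij, hjk, hk, rfl⟩ |
    ⟨C, D, hCD, hC, hD, hH, i, j, k, hij, hj, hk, rfl⟩ |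
    ⟨I, J, K, hIJ, hJK, hIK, hOI, hOJ, hOK, hH, i, j, k, hi, hj, hk, rfl⟩ <;>
    simp only [Finset.mem_insert, Finset.mem_singleton, Prod.mk.injEq] at hx hy
  · rcases hx with ⟨rfl, _⟩ | ⟨rfl, _⟩ | ⟨rfl, _⟩ <;>
      rcases hy with ⟨rfl, _⟩ | ⟨rfl, _⟩ | ⟨rfl, _⟩ <;> exact hXY rfl
  · rcases hx with ⟨rfl, rfl⟩ | ⟨rfl, rfl⟩ | ⟨rfl, rfl⟩
    · omega
    · rw [Nat.odd_iff] at hnX; rw [Nat.even_iff] at hC; omega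
    · omega
  · rcases hx with ⟨rfl, rfl⟩ | ⟨rfl, rfl⟩ | ⟨rfl, rfl⟩ <;> omega

/-- Any two vertices of an edge with odd coordinates coincide. -/
lemma ne_two_odd {e : Finset (ι × ℕ)} (he : e ∈ bEdges n Hedges)
    {X Y : ι} {x y : ℕ} (hx : (X, x) ∈ e) (hy : (Y, y) ∈ e)
    (hxo : x % 2 = 1) (hyo : y % 2 = 1) : (X, x) = (Y, y) := by
  rcases he with ⟨C, hodd, h3, i, j, k, hij, hjk, hk, rfl⟩ |
    ⟨C, D, hCD, hC, hD, hH, i, j, k, hij, hj, hk, rfl⟩ |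
    ⟨I, J, K, hIJ, hJK, hIK, hOI, hOJ, hOK, hH, i, j, k, hi, hj, hk, rfl⟩ <;>
    simp only [Finset.mem_insert, Finset.mem_singleton, Prod.mk.injEq] at hx hy <;>
    rcases hx with ⟨rfl, rfl⟩ | ⟨rfl, rfl⟩ | ⟨rfl, rfl⟩ <;>
    rcases hy with ⟨rfl, rfl⟩ | ⟨rfl, rfl⟩ | ⟨rfl, rfl⟩ <;> first | rfl | omega

/-- In an edge containing `(C, 2i')`, `(C, 2j+1)` with `n C` even, we must have `i' ≤ j`. -/
lemma ne_order_cross {e : Finset (ι × ℕ)} (he : e ∈ bEdges n Hedges)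
    {C : ι} {i' j : ℕ} (h1 : (C, 2 * i') ∈ e) (h2 : (C, 2 * j + 1) ∈ e)
    (hC : Even (n C)) : i' ≤ j := by
  rw [Nat.even_iff] at hC
  rcases he with ⟨C₁, hodd, h3, i, j₁, k, hij, hjk, hk, rfl⟩ |
    ⟨C₁, D₁, hCD, hC₁, hD₁, hH, i, j₁, k, hij, hj, hk, rfl⟩ |
    ⟨I, J, K, hIJ, hJK, hIK, hOI, hOJ, hOK, hH, i, j₁, k, hi, hj, hk, rfl⟩ <;>
    simp only [Finset.mem_insert, Finset.mem_singleton, Prod.mk.injEq] at h1 h2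
  · rcases h2 with ⟨rfl, h⟩ | ⟨rfl, h⟩ | ⟨rfl, h⟩ <;> rw [Nat.odd_iff] at hodd <;> omega
  · rcases h2 with ⟨rfl, h⟩ | ⟨rfl, h⟩ | ⟨rfl, h⟩
    · omega
    · rcases h1 with ⟨_, h'⟩ | ⟨_, h'⟩ | ⟨heq, h'⟩
      · omega
      · omega
      · rw [Nat.odd_iff, ← heq] at hD₁; omega
    · rw [Nat.odd_iff] at hD₁; omega
  · rcases h2 with ⟨rfl, h⟩ | ⟨rfl, h⟩ | ⟨rfl, h⟩ <;> omega

/-- No edge has the form `{(X,0), (X,2j'+1), (X,2k)}` with `0 < k ≤ j'`. -/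
lemma ne_order_same {e : Finset (ι × ℕ)} (he : e ∈ bEdges n Hedges)
    {X : ι} {j' k : ℕ} (h1 : (X, 0) ∈ e) (h2 : (X, 2 * j' + 1) ∈ e)
    (h3 : (X, 2 * k) ∈ e) (hk0 : 0 < k) (hkj : k ≤ j') : False := by
  have hcard : e.card = 3 := card_of_bEdges he
  have hsub : ({(X, 0), (X, 2 * j' + 1), (X, 2 * k)} : Finset (ι × ℕ)) ⊆ e := by
    intro z hz
    simp only [Finset.mem_insert, Finset.mem_singleton] at hz
    rcases hz with rfl | rfl | rfl <;> assumption
  have hc3 : ({(X, 0), (X, 2 * j' + 1), (X, 2 * k)} : Finset (ι × ℕ)).card = 3 := by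
    rw [Finset.card_eq_three]
    refine ⟨_, _, _, ?_, ?_, ?_, rfl⟩ <;> · intro h; rw [Prod.mk.injEq] at h; omega
  have heq : ({(X, 0), (X, 2 * j' + 1), (X, 2 * k)} : Finset (ι × ℕ)) = e :=
    Finset.eq_of_subset_of_card_le hsub (by omega)
  rcases he with ⟨C, hodd, hC3, i₁, j₁, k₁, hij, hjk, hk₁, he'⟩ |
    ⟨C, D, hCD, hC, hD, hH, i₁, j₁, k₁, hij, hj₁, hk₁, he'⟩ |
    ⟨I, J, K, hIJ, hJK, hIK, hOI, hOJ, hOK, hH, i₁, j₁, k₁, hi₁, hj₁, hk₁, he'⟩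
  · -- type 1 : the largest even must be 2k but then j' < k
    have hm2 : (X, 2 * j' + 1) ∈ ({(C, 2*i₁), (C, 2*j₁+1), (C, 2*k₁)} : Finset (ι × ℕ)) :=
      he' ▸ h2
    have hm3 : (C, 2 * k₁) ∈ ({(X, 0), (X, 2*j'+1), (X, 2*k)} : Finset (ι × ℕ)) := by
      rw [heq, he']; simp
    simp only [Finset.mem_insert, Finset.mem_singleton, Prod.mk.injEq] at hm2 hm3
    omega
  · -- type 2 : both components C and D occur, but e has only component X
    have hm1 : (C, 2*i₁) ∈ ({(X, 0), (X, 2*j'+1), (X, 2*k)} : Finset (ι × ℕ)) := by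
      rw [heq, he']; simp
    have hm2 : (D, 2*k₁) ∈ ({(X, 0), (X, 2*j'+1), (X, 2*k)} : Finset (ι × ℕ)) := by
      rw [heq, he']; simp
    simp only [Finset.mem_insert, Finset.mem_singleton, Prod.mk.injEq] at hm1 hm2
    have hCX : C = X := by rcases hm1 with ⟨h, _⟩ | ⟨h, _⟩ | ⟨h, _⟩ <;> exact h
    have hDX : D = X := by rcases hm2 with ⟨h, _⟩ | ⟨h, _⟩ | ⟨h, _⟩ <;> exact h
    exact hCD (hCX.trans hDX.symm)
  · -- type 3 : all coordinates even
    have hm2 : (X, 2 * j' + 1) ∈ ({(I, 2*i₁), (J, 2*j₁), (K, 2*k₁)} : Finset (ι × ℕ)) :=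
      he' ▸ h2
    simp only [Finset.mem_insert, Finset.mem_singleton, Prod.mk.injEq] at hm2
    omega

lemma caseA_core {C D : ι} (hCD : C ≠ D) (hC : Even (n C)) (hD : Odd (n D))
    (hCpos : 0 < n C) (hH : ({C, D} : Finset ι) ∈ Hedges)
    {M : Finset (ι × ℕ)}
    (hM : IsModule (({C, D} : Finset ι).biUnion (compVerts n))
      (induceEdges (({C, D} : Finset ι).biUnion (compVerts n)) (bEdges n Hedges)) M)
    {x y : ι × ℕ} (hx : x ∈ M) (hy : y ∈ M) (hxy : x ≠ y) :
    ({C, D} : Finset ι).biUnion (compVerts n) ⊆ M := by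
  have hC2 : n C % 2 = 0 := Nat.even_iff.mp hC
  have hD2 : n D % 2 = 1 := Nat.odd_iff.mp hD
  have hDpos : 0 < n D := by omega
  have hCge : 2 ≤ n C := by omega
  set V := ({C, D} : Finset ι).biUnion (compVerts n) with hV
  set E := induceEdges V (bEdges n Hedges) with hE
  have memV : ∀ (X : ι) (m : ℕ), X ∈ ({C, D} : Finset ι) → m < n X → (X, m) ∈ V := by
    intro X m h1 h2; exact mem_bUnion_compVerts.mpr ⟨h1, h2⟩
  have hCmem : C ∈ ({C, D} : Finset ι) := by simp
  have hDmem : D ∈ ({C, D} : Finset ι) := by simp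
  -- the cross edges
  have edge2 : ∀ i j k, i ≤ j → 2 * j + 1 ≤ n C - 1 → 2 * k ≤ n D - 1 →
      ({(C, 2 * i), (C, 2 * j + 1), (D, 2 * k)} : Finset (ι × ℕ)) ∈ E := by
    intro i j k h1 h2 h3
    refine ⟨Or.inr (Or.inl ⟨C, D, hCD, hC, hD, hH, i, j, k, h1, h2, h3, rfl⟩), ?_⟩
    intro z hz
    simp only [Finset.mem_insert, Finset.mem_singleton] at hz
    rcases hz with rfl | rfl | rfl
    · exact memV _ _ hCmem (by omega)
    · exact memV _ _ hCmem (by omega)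
    · exact memV _ _ hDmem (by omega)
  -- the edges inside D
  have edge1 : ∀ i j k, i ≤ j → j < k → 2 * k ≤ n D - 1 →
      ({(D, 2 * i), (D, 2 * j + 1), (D, 2 * k)} : Finset (ι × ℕ)) ∈ E := by
    intro i j k h1 h2 h3
    refine ⟨Or.inl ⟨D, hD, by omega, i, j, k, h1, h2, h3, rfl⟩, ?_⟩
    intro z hz
    simp only [Finset.mem_insert, Finset.mem_singleton] at hz
    rcases hz with rfl | rfl | rfl <;> exact memV _ _ hDmem (by omega)
  have neCD : ∀ a b : ℕ, (C, a) ≠ (D, b) := by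
    intro a b h; rw [Prod.mk.injEq] at h; exact hCD h.1
  have neDC : ∀ a b : ℕ, (D, a) ≠ (C, b) := by
    intro a b h; rw [Prod.mk.injEq] at h; exact hCD h.1.symm
  have neNum : ∀ (X : ι) (a b : ℕ), a ≠ b → (X, a) ≠ (X, b) := by
    intro X a b hab h; rw [Prod.mk.injEq] at h; exact hab h.2
  -- saturation from (C,0) and an even vertex of D
  have claimA' : ∀ k, 2 * k ≤ n D - 1 → (C, 0) ∈ M → (D, 2 * k) ∈ M → V ⊆ M := by
    intro k hk h0 hdk
    have oddC : ∀ j, 2 * j + 1 ≤ n C - 1 → (C, 2 * j + 1) ∈ M := by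
      intro j hj
      exact mod_rule1 hM (edge2 0 j k (by omega) hj hk) h0 hdk (by simp) (by simp)
        (neCD 0 (2 * k)) (by simp)
    have evenD : ∀ k', 2 * k' ≤ n D - 1 → (D, 2 * k') ∈ M := by
      intro k' hk'
      exact mod_rule1 hM (edge2 0 0 k' le_rfl (by omega) hk') h0
        (oddC 0 (by omega)) (by simp) (by simp) (neNum C 0 1 (by omega)) (by simp)
    have evenC : ∀ i, 2 * i ≤ n C - 1 → (C, 2 * i) ∈ M := by
      intro i hi
      exact mod_rule1 hM (edge2 i i 0 le_rfl (by omega) (by omega))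
        (oddC i (by omega)) (evenD 0 (by omega)) (by simp) (by simp) (neCD _ _) (by simp)
    have oddD : ∀ j, 2 * j + 1 ≤ n D - 1 → (D, 2 * j + 1) ∈ M := by
      intro j hj
      exact mod_rule1 hM (edge1 0 j (j + 1) (by omega) (by omega) (by omega))
        (evenD 0 (by omega)) (evenD (j + 1) (by omega)) (by simp) (by simp)
        (neNum D _ _ (by omega)) (by simp)
    rintro ⟨X, m⟩ hm
    obtain ⟨hX, hlt⟩ := mem_bUnion_compVerts.mp hm
    simp only [Finset.mem_insert, Finset.mem_singleton] at hX
    rcases hX with rfl | rfl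
    · rcases Nat.even_or_odd m with ⟨t, rfl⟩ | ⟨t, rfl⟩
      · have h := evenC t (by omega); rwa [two_mul] at h
      · exact oddC t (by omega)
    · rcases Nat.even_or_odd m with ⟨t, rfl⟩ | ⟨t, rfl⟩
      · have h := evenD t (by omega); rwa [two_mul] at h
      · exact oddD t (by omega)
  -- any C-vertex plus an even D-vertex saturates
  have claimA2 : ∀ m, m < n C → (C, m) ∈ M → ∀ k, 2 * k ≤ n D - 1 → (D, 2 * k) ∈ M →
      V ⊆ M := by
    have oddcase : ∀ i, 2 * i + 1 ≤ n C - 1 → (C, 2 * i + 1) ∈ M →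
        ∀ k, 2 * k ≤ n D - 1 → (D, 2 * k) ∈ M → V ⊆ M := by
      intro i hi hci k hk hdk
      have h0 : (C, 0) ∈ M := by
        have h := mod_rule1 hM (edge2 0 i k (by omega) hi hk) hci hdk (by simp) (by simp)
          (neCD _ _)
        simpa using h (show (C, 2 * 0) ∈ _ by simp)
      exact claimA' k hk h0 hdk
    intro m hm hcm k hk hdk
    rcases Nat.even_or_odd m with ⟨i, hi⟩ | ⟨i, hi⟩
    · subst hi
      have hci : (C, 2 * i) ∈ M := by rwa [two_mul]
      have hodd : (C, 2 * i + 1) ∈ M :=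
        mod_rule1 hM (edge2 i i k le_rfl (by omega) hk) hci hdk (by simp) (by simp)
          (neCD _ _) (by simp)
      exact oddcase i (by omega) hodd k hk hdk
    · subst hi
      exact oddcase i (by omega) hcm k hk hdk
  -- any C-vertex plus an odd D-vertex saturates
  have claimA3 : ∀ m, m < n C → (C, m) ∈ M → ∀ t, 2 * t + 1 ≤ n D - 1 →
      (D, 2 * t + 1) ∈ M → V ⊆ M := by
    intro m hm hcm t ht hdt
    rcases Nat.even_or_odd m with ⟨i, hi⟩ | ⟨i, hi⟩
    · subst hi
      have hci : (C, 2 * i) ∈ M := by rwa [two_mul]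
      have hstep := mod_rule2 hM (edge2 i i 0 le_rfl (by omega) (by omega)) hci hdt rfl
        (neNum C _ _ (by omega)) (neCD _ _)
        (by
          intro hmem
          exact ne_odd_cross hmem.1 (show (D, 2 * t + 1) ∈ _ by simp)
            (show (C, 2 * i + 1) ∈ _ by simp) hCD.symm (by omega) hD)
      have hd0 : (D, 2 * 0) ∈ M := by
        rcases hstep with h | h
        · exact mod_rule1 hM (edge2 i i 0 le_rfl (by omega) (by omega)) hci h
            (by simp) (by simp) (neNum C _ _ (by omega)) (by simp)
        · exact h
      exact claimA2 (2 * i) (by omega) hci 0 (by omega) hd0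
    · subst hi
      have hstep := mod_rule2 hM (edge2 0 i 0 (by omega) (by omega) (by omega)) hcm hdt
        (p := (C, 2 * 0)) (q := (D, 2 * 0))
        (by ext z; simp only [Finset.mem_insert, Finset.mem_singleton]; tauto)
        (neNum C _ _ (by omega)) (neCD _ _)
        (by
          intro hmem
          exact ne_odd_cross hmem.1 (show (D, 2 * t + 1) ∈ _ by simp)
            (show (C, 2 * 0) ∈ _ by simp) hCD.symm (by omega) hD)
      have hd0 : (D, 2 * 0) ∈ M := by
        rcases hstep with h | h
        · exact mod_rule1 hM (edge2 0 i 0 (by omega) (by omega) (by omega)) h hcm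
            (by simp) (by simp) (neNum C _ _ (by omega)) (by simp)
        · exact h
      exact claimA2 (2 * i + 1) (by omega) hcm 0 (by omega) hd0
  -- an even and an odd C-vertex saturate
  have sub_eo : ∀ i t, 2 * i ≤ n C - 1 → 2 * t + 1 ≤ n C - 1 → (C, 2 * i) ∈ M →
      (C, 2 * t + 1) ∈ M → V ⊆ M := by
    intro i t hi ht hci hct
    by_cases hit : i ≤ t
    · have hd0 : (D, 2 * 0) ∈ M :=
        mod_rule1 hM (edge2 i t 0 hit ht (by omega)) hci hct (by simp) (by simp)
          (neNum C _ _ (by omega)) (by simp)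
      exact claimA2 (2 * i) (by omega) hci 0 (by omega) hd0
    · have hstep := mod_rule2 hM (edge2 i i 0 le_rfl (by omega) (by omega)) hci hct rfl
        (neNum C _ _ (by omega)) (neCD _ _)
        (by
          intro hmem
          have h := ne_two_odd hmem.1 (show (C, 2 * t + 1) ∈ _ by simp)
            (show (C, 2 * i + 1) ∈ _ by simp) (by omega) (by omega)
          rw [Prod.mk.injEq] at h; omega)
      have hd0 : (D, 2 * 0) ∈ M := by
        rcases hstep with h | h
        · exact mod_rule1 hM (edge2 i i 0 le_rfl (by omega) (by omega)) hci h
            (by simp) (by simp) (neNum C _ _ (by omega)) (by simp)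
        · exact h
      exact claimA2 (2 * i) (by omega) hci 0 (by omega) hd0
  -- two C-vertices saturate
  have claimA4 : ∀ m m', m < n C → m' < n C → m ≠ m' → (C, m) ∈ M → (C, m') ∈ M →
      V ⊆ M := by
    have keyee : ∀ i i', i < i' → 2 * i' ≤ n C - 1 → (C, 2 * i) ∈ M → (C, 2 * i') ∈ M →
        V ⊆ M := by
      intro i i' hii hi' hci hci'
      have hstep := mod_rule2 hM (edge2 i i 0 le_rfl (by omega) (by omega)) hci hci' rfl
        (neNum C _ _ (by omega)) (neCD _ _)
        (by
          intro hmem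
          have h := ne_order_cross hmem.1 (show (C, 2 * i') ∈ _ by simp)
            (show (C, 2 * i + 1) ∈ _ by simp) hC
          omega)
      rcases hstep with h | h
      · exact sub_eo i i (by omega) (by omega) hci h
      · exact claimA2 (2 * i) (by omega) hci 0 (by omega) h
    have keyoo : ∀ t t', t < t' → 2 * t' + 1 ≤ n C - 1 → (C, 2 * t + 1) ∈ M →
        (C, 2 * t' + 1) ∈ M → V ⊆ M := by
      intro t t' htt ht' hct hct'
      have hstep := mod_rule2 hM (edge2 t' t' 0 le_rfl ht' (by omega)) hct' hct
        (p := (C, 2 * t')) (q := (D, 2 * 0))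
        (by ext z; simp only [Finset.mem_insert, Finset.mem_singleton]; tauto)
        (neNum C _ _ (by omega)) (neCD _ _)
        (by
          intro hmem
          have h := ne_order_cross hmem.1 (show (C, 2 * t') ∈ _ by simp)
            (show (C, 2 * t + 1) ∈ _ by simp) hC
          omega)
      rcases hstep with h | h
      · exact sub_eo t' t (by omega) (by omega) h hct
      · exact claimA2 (2 * t + 1) (by omega) hct 0 (by omega) h
    intro m m' hm hm' hmm hcm hcm'
    rcases Nat.even_or_odd m with ⟨i, hi⟩ | ⟨i, hi⟩ <;>
      rcases Nat.even_or_odd m' with ⟨i', hi'⟩ | ⟨i', hi'⟩ <;> subst hi <;> subst hi'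
    · have h1 : (C, 2 * i) ∈ M := by rwa [two_mul]
      have h2 : (C, 2 * i') ∈ M := by rwa [two_mul]
      rcases Nat.lt_or_ge i i' with h | h
      · exact keyee i i' h (by omega) h1 h2
      · exact keyee i' i (by omega) (by omega) h2 h1
    · have h1 : (C, 2 * i) ∈ M := by rwa [two_mul]
      exact sub_eo i i' (by omega) (by omega) h1 hcm'
    · have h2 : (C, 2 * i') ∈ M := by rwa [two_mul]
      exact sub_eo i' i (by omega) (by omega) h2 hcm
    · rcases Nat.lt_or_ge i i' with h | h
      · exact keyoo i i' h (by omega) hcm hcm'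
      · exact keyoo i' i (by omega) (by omega) hcm' hcm
  -- an even and an odd D-vertex saturate
  have sub_mix : ∀ k t, 2 * k ≤ n D - 1 → 2 * t + 1 ≤ n D - 1 → (D, 2 * k) ∈ M →
      (D, 2 * t + 1) ∈ M → V ⊆ M := by
    intro k t hk ht hdk hdt
    have hstep := mod_rule2 hM (edge2 0 0 k le_rfl (by omega) hk) hdk hdt
      (p := (C, 2 * 0)) (q := (C, 2 * 0 + 1))
      (by ext z; simp only [Finset.mem_insert, Finset.mem_singleton]; tauto)
      (neDC _ _) (neDC _ _)
      (by
        intro hmem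
        exact ne_odd_cross hmem.1 (show (D, 2 * t + 1) ∈ _ by simp)
          (show (C, 2 * 0) ∈ _ by simp) hCD.symm (by omega) hD)
    rcases hstep with h | h
    · exact claimA2 (2 * 0) (by omega) h k hk hdk
    · exact claimA2 (2 * 0 + 1) (by omega) h k hk hdk
  -- two D-vertices saturate
  have claimA5 : ∀ m m', m < n D → m' < n D → m ≠ m' → (D, m) ∈ M → (D, m') ∈ M →
      V ⊆ M := by
    have keyee : ∀ k k', k < k' → 2 * k' ≤ n D - 1 → (D, 2 * k) ∈ M → (D, 2 * k') ∈ M →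
        V ⊆ M := by
      intro k k' hkk hk' hdk hdk'
      have hodd : (D, 2 * k + 1) ∈ M :=
        mod_rule1 hM (edge1 k k k' le_rfl hkk hk') hdk hdk' (by simp) (by simp)
          (neNum D _ _ (by omega)) (by simp)
      exact sub_mix k k (by omega) (by omega) hdk hodd
    have keyoo : ∀ t t', t < t' → 2 * t' + 1 ≤ n D - 1 → (D, 2 * t + 1) ∈ M →
        (D, 2 * t' + 1) ∈ M → V ⊆ M := by
      intro t t' htt ht' hdt hdt'
      have hstep := mod_rule2 hM (edge1 0 t (t + 1) (by omega) (by omega) (by omega))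
        hdt hdt' (p := (D, 2 * 0)) (q := (D, 2 * (t + 1)))
        (by ext z; simp only [Finset.mem_insert, Finset.mem_singleton]; tauto)
        (neNum D _ _ (by omega)) (neNum D _ _ (by omega))
        (by
          intro hmem
          exact ne_order_same hmem.1 (show (D, 0) ∈ _ by simp)
            (show (D, 2 * t' + 1) ∈ _ by simp)
            (show (D, 2 * (t + 1)) ∈ _ by simp) (by omega) (by omega))
      rcases hstep with h | h
      · exact sub_mix 0 t (by omega) (by omega) h hdt
      · exact sub_mix (t + 1) t (by omega) (by omega) h hdt
    intro m m' hm hm' hmm hdm hdm'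
    rcases Nat.even_or_odd m with ⟨t, ht⟩ | ⟨t, ht⟩ <;>
      rcases Nat.even_or_odd m' with ⟨t', ht'⟩ | ⟨t', ht'⟩ <;> subst ht <;> subst ht'
    · have h1 : (D, 2 * t) ∈ M := by rwa [two_mul]
      have h2 : (D, 2 * t') ∈ M := by rwa [two_mul]
      rcases Nat.lt_or_ge t t' with h | h
      · exact keyee t t' h (by omega) h1 h2
      · exact keyee t' t (by omega) (by omega) h2 h1
    · have h1 : (D, 2 * t) ∈ M := by rwa [two_mul]
      exact sub_mix t t' (by omega) (by omega) h1 hdm'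
    · have h2 : (D, 2 * t') ∈ M := by rwa [two_mul]
      exact sub_mix t' t (by omega) (by omega) h2 hdm
    · rcases Nat.lt_or_ge t t' with h | h
      · exact keyoo t t' h (by omega) hdm hdm'
      · exact keyoo t' t (by omega) (by omega) hdm' hdm
  -- dispatch on the pair x, y
  obtain ⟨X, m⟩ := x
  obtain ⟨Y, m'⟩ := y
  have hxV := hM.1 hx
  have hyV := hM.1 hy
  obtain ⟨hXmem, hmlt⟩ := mem_bUnion_compVerts.mp hxV
  obtain ⟨hYmem, hmlt'⟩ := mem_bUnion_compVerts.mp hyV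
  simp only [Finset.mem_insert, Finset.mem_singleton] at hXmem hYmem
  have mixed : ∀ m₁ m₂, m₁ < n C → m₂ < n D → (C, m₁) ∈ M → (D, m₂) ∈ M → V ⊆ M := by
    intro m₁ m₂ h1 h2 hc hd
    rcases Nat.even_or_odd m₂ with ⟨t, ht⟩ | ⟨t, ht⟩
    · subst ht
      have h : (D, 2 * t) ∈ M := by rwa [two_mul]
      exact claimA2 m₁ h1 hc t (by omega) h
    · subst ht
      exact claimA3 m₁ h1 hc t (by omega) hd
  rcases hXmem with rfl | rfl <;> rcases hYmem with rfl | rfl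
  · exact claimA4 m m' hmlt hmlt' (by rintro rfl; exact hxy rfl) hx hy
  · exact mixed m m' hmlt hmlt' hx hy
  · exact mixed m' m hmlt' hmlt hy hx
  · exact claimA5 m m' hmlt hmlt' (by rintro rfl; exact hxy rfl) hx hy

set_option maxHeartbeats 4000000 in
lemma caseB_core {I J K : ι} (hIJ : I ≠ J) (hJK : J ≠ K) (hIK : I ≠ K)
    (hI : Odd (n I)) (hJ : Odd (n J)) (hK : Odd (n K))
    (hH : ({I, J, K} : Finset ι) ∈ Hedges)
    {M : Finset (ι × ℕ)}
    (hM : IsModule (({I, J, K} : Finset ι).biUnion (compVerts n))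
      (induceEdges (({I, J, K} : Finset ι).biUnion (compVerts n)) (bEdges n Hedges)) M)
    {x y : ι × ℕ} (hx : x ∈ M) (hy : y ∈ M) (hxy : x ≠ y) :
    ({I, J, K} : Finset ι).biUnion (compVerts n) ⊆ M := by
  set V := ({I, J, K} : Finset ι).biUnion (compVerts n) with hV
  set E := induceEdges V (bEdges n Hedges) with hE
  have oddComp : ∀ X ∈ ({I, J, K} : Finset ι), n X % 2 = 1 := by
    intro X hX
    simp only [Finset.mem_insert, Finset.mem_singleton] at hX
    rcases hX with rfl | rfl | rfl
    exacts [Nat.odd_iff.mp hI, Nat.odd_iff.mp hJ, Nat.odd_iff.mp hK]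
  have memV : ∀ (X : ι) (m : ℕ), X ∈ ({I, J, K} : Finset ι) → m < n X → (X, m) ∈ V := by
    intro X m h1 h2; exact mem_bUnion_compVerts.mpr ⟨h1, h2⟩
  have neNum : ∀ (X : ι) (a b : ℕ), a ≠ b → (X, a) ≠ (X, b) := by
    intro X a b hab h; rw [Prod.mk.injEq] at h; exact hab h.2
  have neComp : ∀ (X Y : ι) (a b : ℕ), X ≠ Y → (X, a) ≠ (Y, b) := by
    intro X Y a b hXY h; rw [Prod.mk.injEq] at h; exact hXY h.1
  -- the cross edges, for an arbitrary ordering of the three components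
  have edgeT : ∀ A B Cc : ι, A ≠ B → B ≠ Cc → A ≠ Cc →
      ({A, B, Cc} : Finset ι) = ({I, J, K} : Finset ι) → ∀ i j k,
      2 * i ≤ n A - 1 → 2 * j ≤ n B - 1 → 2 * k ≤ n Cc - 1 →
      ({(A, 2 * i), (B, 2 * j), (Cc, 2 * k)} : Finset (ι × ℕ)) ∈ E := by
    intro A B Cc h1 h2 h3 hset i j k hi hj hk
    have hA : A ∈ ({I, J, K} : Finset ι) := by rw [← hset]; simp
    have hB : B ∈ ({I, J, K} : Finset ι) := by rw [← hset]; simp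
    have hCc : Cc ∈ ({I, J, K} : Finset ι) := by rw [← hset]; simp
    have hOA := oddComp A hA
    have hOB := oddComp B hB
    have hOC := oddComp Cc hCc
    refine ⟨Or.inr (Or.inr ⟨A, B, Cc, h1, h2, h3, Nat.odd_iff.mpr hOA, Nat.odd_iff.mpr hOB,
      Nat.odd_iff.mpr hOC, by rw [hset]; exact hH, i, j, k, hi, hj, hk, rfl⟩), ?_⟩
    intro z hz
    simp only [Finset.mem_insert, Finset.mem_singleton] at hz
    rcases hz with rfl | rfl | rfl
    · exact memV _ _ hA (by omega)
    · exact memV _ _ hB (by omega)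
    · exact memV _ _ hCc (by omega)
  -- the edges inside one component
  have edgeU : ∀ X, X ∈ ({I, J, K} : Finset ι) → ∀ i j k, i ≤ j → j < k →
      2 * k ≤ n X - 1 →
      ({(X, 2 * i), (X, 2 * j + 1), (X, 2 * k)} : Finset (ι × ℕ)) ∈ E := by
    intro X hX i j k h1 h2 h3
    have hOX := oddComp X hX
    refine ⟨Or.inl ⟨X, Nat.odd_iff.mpr hOX, by omega, i, j, k, h1, h2, h3, rfl⟩, ?_⟩
    intro z hz
    simp only [Finset.mem_insert, Finset.mem_singleton] at hz
    rcases hz with rfl | rfl | rfl <;> exact memV _ _ hX (by omega)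
  -- two even vertices in two distinct components saturate
  have claimB1 : ∀ A B Cc : ι, A ≠ B → B ≠ Cc → A ≠ Cc →
      ({A, B, Cc} : Finset ι) = ({I, J, K} : Finset ι) → ∀ i j,
      2 * i ≤ n A - 1 → 2 * j ≤ n B - 1 → (A, 2 * i) ∈ M → (B, 2 * j) ∈ M → V ⊆ M := by
    intro A B Cc h1 h2 h3 hset i j hi hj hAi hBj
    have hA : A ∈ ({I, J, K} : Finset ι) := by rw [← hset]; simp
    have hB : B ∈ ({I, J, K} : Finset ι) := by rw [← hset]; simp
    have hCc : Cc ∈ ({I, J, K} : Finset ι) := by rw [← hset]; simp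
    have evC : ∀ k, 2 * k ≤ n Cc - 1 → (Cc, 2 * k) ∈ M := by
      intro k hk
      exact mod_rule1 hM (edgeT A B Cc h1 h2 h3 hset i j k hi hj hk) hAi hBj
        (by simp) (by simp) (neComp _ _ _ _ h1) (by simp)
    have evB : ∀ j', 2 * j' ≤ n B - 1 → (B, 2 * j') ∈ M := by
      intro j' hj'
      exact mod_rule1 hM (edgeT A B Cc h1 h2 h3 hset i j' 0 hi hj' (by omega)) hAi
        (evC 0 (by omega)) (by simp) (by simp) (neComp _ _ _ _ h3) (by simp)
    have evA : ∀ i', 2 * i' ≤ n A - 1 → (A, 2 * i') ∈ M := by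
      intro i' hi'
      exact mod_rule1 hM (edgeT A B Cc h1 h2 h3 hset i' j 0 hi' hj (by omega)) hBj
        (evC 0 (by omega)) (by simp) (by simp) (neComp _ _ _ _ h2) (by simp)
    have evAll : ∀ X, X ∈ ({I, J, K} : Finset ι) → ∀ t, 2 * t ≤ n X - 1 →
        (X, 2 * t) ∈ M := by
      intro X hX t ht
      have hX' : X ∈ ({A, B, Cc} : Finset ι) := by rw [hset]; exact hX
      simp only [Finset.mem_insert, Finset.mem_singleton] at hX'
      rcases hX' with rfl | rfl | rfl
      exacts [evA t ht, evB t ht, evC t ht]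
    have oddAll : ∀ X, X ∈ ({I, J, K} : Finset ι) → ∀ t, 2 * t + 1 ≤ n X - 1 →
        (X, 2 * t + 1) ∈ M := by
      intro X hX t ht
      have hOX := oddComp X hX
      exact mod_rule1 hM (edgeU X hX 0 t (t + 1) (by omega) (by omega) (by omega))
        (evAll X hX 0 (by omega)) (evAll X hX (t + 1) (by omega)) (by simp) (by simp)
        (neNum X _ _ (by omega)) (by simp)
    rintro ⟨X, m⟩ hm
    obtain ⟨hX, hlt⟩ := mem_bUnion_compVerts.mp hm
    have hOX := oddComp X hX
    rcases Nat.even_or_odd m with ⟨t, rfl⟩ | ⟨t, rfl⟩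
    · have h := evAll X hX t (by omega); rwa [two_mul] at h
    · exact oddAll X hX t (by omega)
  -- an even and an odd vertex of the same component saturate
  have claimB3 : ∀ A B Cc : ι, A ≠ B → B ≠ Cc → A ≠ Cc →
      ({A, B, Cc} : Finset ι) = ({I, J, K} : Finset ι) → ∀ i t,
      2 * i ≤ n A - 1 → 2 * t + 1 ≤ n A - 1 → (A, 2 * i) ∈ M → (A, 2 * t + 1) ∈ M →
      V ⊆ M := by
    intro A B Cc h1 h2 h3 hset i t hi ht hAi hAt
    have hA : A ∈ ({I, J, K} : Finset ι) := by rw [← hset]; simp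
    have hB : B ∈ ({I, J, K} : Finset ι) := by rw [← hset]; simp
    have hset' : ({A, Cc, B} : Finset ι) = ({I, J, K} : Finset ι) := by
      rw [← hset]; ext z; simp only [Finset.mem_insert, Finset.mem_singleton]; tauto
    have hOA := oddComp A hA
    have hOB := oddComp B hB
    have hstep := mod_rule2 hM
      (edgeT A B Cc h1 h2 h3 hset i 0 0 hi (by omega) (by omega)) hAi hAt rfl
      (neComp _ _ _ _ h1) (neComp _ _ _ _ h3)
      (by
        intro hmem
        exact ne_odd_cross hmem.1 (show (A, 2 * t + 1) ∈ _ by simp)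
          (show (B, 2 * 0) ∈ _ by simp) h1 (by omega) (Nat.odd_iff.mpr hOA))
    rcases hstep with h | h
    · exact claimB1 A B Cc h1 h2 h3 hset i 0 hi (by omega) hAi h
    · exact claimB1 A Cc B h3 h2.symm h1 hset' i 0 hi (by omega) hAi h
  -- an even vertex and an odd vertex of another component saturate
  have claimB5 : ∀ A B Cc : ι, A ≠ B → B ≠ Cc → A ≠ Cc →
      ({A, B, Cc} : Finset ι) = ({I, J, K} : Finset ι) → ∀ i t,
      2 * i ≤ n A - 1 → 2 * t + 1 ≤ n B - 1 → (A, 2 * i) ∈ M → (B, 2 * t + 1) ∈ M →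
      V ⊆ M := by
    intro A B Cc h1 h2 h3 hset i t hi ht hAi hBt
    have hB : B ∈ ({I, J, K} : Finset ι) := by rw [← hset]; simp
    have hset' : ({A, Cc, B} : Finset ι) = ({I, J, K} : Finset ι) := by
      rw [← hset]; ext z; simp only [Finset.mem_insert, Finset.mem_singleton]; tauto
    have hOB := oddComp B hB
    have hstep := mod_rule2 hM
      (edgeT A B Cc h1 h2 h3 hset i 0 0 hi (by omega) (by omega)) hAi hBt rfl
      (neComp _ _ _ _ h1) (neComp _ _ _ _ h3)
      (by
        intro hmem
        exact ne_odd_cross hmem.1 (show (B, 2 * t + 1) ∈ _ by simp)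
          (show (Cc, 2 * 0) ∈ _ by simp) h2 (by omega) (Nat.odd_iff.mpr hOB))
    rcases hstep with h | h
    · exact claimB1 A B Cc h1 h2 h3 hset i 0 hi (by omega) hAi h
    · exact claimB1 A Cc B h3 h2.symm h1 hset' i 0 hi (by omega) hAi h
  -- two even vertices of the same component saturate
  have claimB2 : ∀ A B Cc : ι, A ≠ B → B ≠ Cc → A ≠ Cc →
      ({A, B, Cc} : Finset ι) = ({I, J, K} : Finset ι) → ∀ i i', i < i' →
      2 * i' ≤ n A - 1 → (A, 2 * i) ∈ M → (A, 2 * i') ∈ M → V ⊆ M := by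
    intro A B Cc h1 h2 h3 hset i i' hii hi' hAi hAi'
    have hA : A ∈ ({I, J, K} : Finset ι) := by rw [← hset]; simp
    have hodd : (A, 2 * i + 1) ∈ M :=
      mod_rule1 hM (edgeU A hA i i i' le_rfl hii hi') hAi hAi' (by simp) (by simp)
        (neNum A _ _ (by omega)) (by simp)
    exact claimB3 A B Cc h1 h2 h3 hset i i (by omega) (by omega) hAi hodd
  -- two odd vertices of the same component saturate
  have claimB4 : ∀ A B Cc : ι, A ≠ B → B ≠ Cc → A ≠ Cc →
      ({A, B, Cc} : Finset ι) = ({I, J, K} : Finset ι) → ∀ t t', t < t' →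
      2 * t' + 1 ≤ n A - 1 → (A, 2 * t + 1) ∈ M → (A, 2 * t' + 1) ∈ M → V ⊆ M := by
    intro A B Cc h1 h2 h3 hset t t' htt ht' hAt hAt'
    have hA : A ∈ ({I, J, K} : Finset ι) := by rw [← hset]; simp
    have hOA := oddComp A hA
    have hstep := mod_rule2 hM (edgeU A hA 0 t (t + 1) (by omega) (by omega) (by omega))
      hAt hAt' (p := (A, 2 * 0)) (q := (A, 2 * (t + 1)))
      (by ext z; simp only [Finset.mem_insert, Finset.mem_singleton]; tauto)
      (neNum A _ _ (by omega)) (neNum A _ _ (by omega))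
      (by
        intro hmem
        exact ne_order_same hmem.1 (show (A, 0) ∈ _ by simp)
          (show (A, 2 * t' + 1) ∈ _ by simp) (show (A, 2 * (t + 1)) ∈ _ by simp)
          (by omega) (by omega))
    rcases hstep with h | h
    · exact claimB3 A B Cc h1 h2 h3 hset 0 t (by omega) (by omega) h hAt
    · exact claimB3 A B Cc h1 h2 h3 hset (t + 1) t (by omega) (by omega) h hAt
  -- odd vertices of two distinct components saturate
  have claimB6 : ∀ A B Cc : ι, A ≠ B → B ≠ Cc → A ≠ Cc →
      ({A, B, Cc} : Finset ι) = ({I, J, K} : Finset ι) → ∀ t s,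
      2 * t + 1 ≤ n A - 1 → 2 * s + 1 ≤ n B - 1 → (A, 2 * t + 1) ∈ M →
      (B, 2 * s + 1) ∈ M → V ⊆ M := by
    intro A B Cc h1 h2 h3 hset t s ht hs hAt hBs
    have hA : A ∈ ({I, J, K} : Finset ι) := by rw [← hset]; simp
    have hB : B ∈ ({I, J, K} : Finset ι) := by rw [← hset]; simp
    have hOA := oddComp A hA
    have hOB := oddComp B hB
    have hstep := mod_rule2 hM (edgeU A hA 0 t (t + 1) (by omega) (by omega) (by omega))
      hAt hBs (p := (A, 2 * 0)) (q := (A, 2 * (t + 1)))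
      (by ext z; simp only [Finset.mem_insert, Finset.mem_singleton]; tauto)
      (neNum A _ _ (by omega)) (neNum A _ _ (by omega))
      (by
        intro hmem
        exact ne_odd_cross hmem.1 (show (B, 2 * s + 1) ∈ _ by simp)
          (show (A, 2 * 0) ∈ _ by simp) h1.symm (by omega) (Nat.odd_iff.mpr hOB))
    rcases hstep with h | h
    · exact claimB3 A B Cc h1 h2 h3 hset 0 t (by omega) (by omega) h hAt
    · exact claimB3 A B Cc h1 h2 h3 hset (t + 1) t (by omega) (by omega) h hAt
  -- pair dispatchers
  have pair_same : ∀ A B Cc : ι, A ≠ B → B ≠ Cc → A ≠ Cc →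
      ({A, B, Cc} : Finset ι) = ({I, J, K} : Finset ι) → ∀ m m', m < n A → m' < n A →
      m ≠ m' → (A, m) ∈ M → (A, m') ∈ M → V ⊆ M := by
    intro A B Cc h1 h2 h3 hset m m' hm hm' hmm hAm hAm'
    have hA : A ∈ ({I, J, K} : Finset ι) := by rw [← hset]; simp
    have hOA := oddComp A hA
    rcases Nat.even_or_odd m with ⟨t, ht⟩ | ⟨t, ht⟩ <;>
      rcases Nat.even_or_odd m' with ⟨t', ht'⟩ | ⟨t', ht'⟩ <;> subst ht <;> subst ht'
    · have g1 : (A, 2 * t) ∈ M := by rwa [two_mul]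
      have g2 : (A, 2 * t') ∈ M := by rwa [two_mul]
      rcases Nat.lt_or_ge t t' with h | h
      · exact claimB2 A B Cc h1 h2 h3 hset t t' h (by omega) g1 g2
      · exact claimB2 A B Cc h1 h2 h3 hset t' t (by omega) (by omega) g2 g1
    · have g1 : (A, 2 * t) ∈ M := by rwa [two_mul]
      exact claimB3 A B Cc h1 h2 h3 hset t t' (by omega) (by omega) g1 hAm'
    · have g2 : (A, 2 * t') ∈ M := by rwa [two_mul]
      exact claimB3 A B Cc h1 h2 h3 hset t' t (by omega) (by omega) g2 hAm
    · rcases Nat.lt_or_ge t t' with h | h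
      · exact claimB4 A B Cc h1 h2 h3 hset t t' h (by omega) hAm hAm'
      · exact claimB4 A B Cc h1 h2 h3 hset t' t (by omega) (by omega) hAm' hAm
  have pair_diff : ∀ A B Cc : ι, A ≠ B → B ≠ Cc → A ≠ Cc →
      ({A, B, Cc} : Finset ι) = ({I, J, K} : Finset ι) → ∀ m m', m < n A → m' < n B →
      (A, m) ∈ M → (B, m') ∈ M → V ⊆ M := by
    intro A B Cc h1 h2 h3 hset m m' hm hm' hAm hBm'
    have hsetBA : ({B, A, Cc} : Finset ι) = ({I, J, K} : Finset ι) := by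
      rw [← hset]; ext z; simp only [Finset.mem_insert, Finset.mem_singleton]; tauto
    have hA : A ∈ ({I, J, K} : Finset ι) := by rw [← hset]; simp
    have hB : B ∈ ({I, J, K} : Finset ι) := by rw [← hset]; simp
    have hOA := oddComp A hA
    have hOB := oddComp B hB
    rcases Nat.even_or_odd m with ⟨t, ht⟩ | ⟨t, ht⟩ <;>
      rcases Nat.even_or_odd m' with ⟨t', ht'⟩ | ⟨t', ht'⟩ <;> subst ht <;> subst ht'
    · have g1 : (A, 2 * t) ∈ M := by rwa [two_mul]
      have g2 : (B, 2 * t') ∈ M := by rwa [two_mul]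
      exact claimB1 A B Cc h1 h2 h3 hset t t' (by omega) (by omega) g1 g2
    · have g1 : (A, 2 * t) ∈ M := by rwa [two_mul]
      exact claimB5 A B Cc h1 h2 h3 hset t t' (by omega) (by omega) g1 hBm'
    · have g2 : (B, 2 * t') ∈ M := by rwa [two_mul]
      exact claimB5 B A Cc h1.symm h3 h2 hsetBA t' t (by omega) (by omega) g2 hAm
    · exact claimB6 A B Cc h1 h2 h3 hset t t' (by omega) (by omega) hAm hBm'
  -- final dispatch
  obtain ⟨X, m⟩ := x
  obtain ⟨Y, m'⟩ := y
  have hxV := hM.1 hx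
  have hyV := hM.1 hy
  obtain ⟨hXmem, hmlt⟩ := mem_bUnion_compVerts.mp hxV
  obtain ⟨hYmem, hmlt'⟩ := mem_bUnion_compVerts.mp hyV
  simp only [Finset.mem_insert, Finset.mem_singleton] at hXmem hYmem
  have hsetIKJ : ({I, K, J} : Finset ι) = ({I, J, K} : Finset ι) := by
    ext z; simp only [Finset.mem_insert, Finset.mem_singleton]; tauto
  have hsetJIK : ({J, I, K} : Finset ι) = ({I, J, K} : Finset ι) := by
    ext z; simp only [Finset.mem_insert, Finset.mem_singleton]; tauto
  have hsetJKI : ({J, K, I} : Finset ι) = ({I, J, K} : Finset ι) := by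
    ext z; simp only [Finset.mem_insert, Finset.mem_singleton]; tauto
  have hsetKIJ : ({K, I, J} : Finset ι) = ({I, J, K} : Finset ι) := by
    ext z; simp only [Finset.mem_insert, Finset.mem_singleton]; tauto
  have hsetKJI : ({K, J, I} : Finset ι) = ({I, J, K} : Finset ι) := by
    ext z; simp only [Finset.mem_insert, Finset.mem_singleton]; tauto
  rcases hXmem with hX' | hX' | hX' <;> rcases hYmem with hY' | hY' | hY' <;>
    rw [hX'] at hx hmlt hxy <;> rw [hY'] at hy hmlt' hxy
  · exact pair_same I J K hIJ hJK hIK rfl m m' hmlt hmlt'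
      (by rintro rfl; exact hxy rfl) hx hy
  · exact pair_diff I J K hIJ hJK hIK rfl m m' hmlt hmlt' hx hy
  · exact pair_diff I K J hIK hJK.symm hIJ hsetIKJ m m' hmlt hmlt' hx hy
  · exact pair_diff J I K hIJ.symm hIK hJK hsetJIK m m' hmlt hmlt' hx hy
  · exact pair_same J I K hIJ.symm hIK hJK hsetJIK m m' hmlt hmlt'
      (by rintro rfl; exact hxy rfl) hx hy
  · exact pair_diff J K I hJK hIK.symm hIJ.symm hsetJKI m m' hmlt hmlt' hx hy
  · exact pair_diff K I J hIK.symm hIJ hJK.symm hsetKIJ m m' hmlt hmlt' hx hy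
  · exact pair_diff K J I hJK.symm hIJ.symm hIK.symm hsetKJI m m' hmlt hmlt' hx hy
  · exact pair_same K I J hIK.symm hIJ hJK.symm hsetKIJ m m' hmlt hmlt'
      (by rintro rfl; exact hxy rfl) hx hy

end PrimeProof

theorem edge_of_H_induces_prime {ι : Type*} [Fintype ι] [DecidableEq ι]
    (n : ι → ℕ) (hn : ∀ c, 0 < n c) (Hedges : Set (Finset ι))
    (hgood : GoodHEdges n Hedges) (ε : Finset ι) (hε : ε ∈ Hedges) :
    IsPrime (ε.biUnion (compVerts n))
      (induceEdges (ε.biUnion (compVerts n)) (bEdges n Hedges)) := by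
  rcases hgood ε hε with ⟨hcard2, ⟨C, hCε, hC⟩, ⟨D, hDε, hD⟩⟩ | ⟨hcard3, hodd⟩
  · -- the 2-edge case
    have hCD : C ≠ D := by
      rintro rfl; rw [Nat.even_iff] at hC; rw [Nat.odd_iff] at hD; omega
    have hεeq : ε = {C, D} := by
      refine (Finset.eq_of_subset_of_card_le ?_ ?_).symm
      · intro z hz
        simp only [Finset.mem_insert, Finset.mem_singleton] at hz
        rcases hz with rfl | rfl
        exacts [hCε, hDε]
      · rw [Finset.card_insert_of_notMem (by simp [hCD]), Finset.card_singleton]; omega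
    subst hεeq
    constructor
    · have hC2 : 2 ≤ n C := by
        have := hn C; rw [Nat.even_iff] at hC; omega
      have hsub : ({(C, 0), (C, 1), (D, 0)} : Finset (ι × ℕ)) ⊆
          ({C, D} : Finset ι).biUnion (compVerts n) := by
        intro z hz
        simp only [Finset.mem_insert, Finset.mem_singleton] at hz
        rcases hz with rfl | rfl | rfl
        · exact mem_bUnion_compVerts.mpr ⟨by simp, by omega⟩
        · exact mem_bUnion_compVerts.mpr ⟨by simp, by omega⟩
        · exact mem_bUnion_compVerts.mpr ⟨by simp, hn D⟩
      have h3 : ({(C, 0), (C, 1), (D, 0)} : Finset (ι × ℕ)).card = 3 := by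
        rw [Finset.card_eq_three]
        refine ⟨_, _, _, ?_, ?_, ?_, rfl⟩ <;>
          · intro h; rw [Prod.mk.injEq] at h
            first
            | exact absurd h.2 (by omega)
            | exact hCD h.1
      calc 3 = ({(C, 0), (C, 1), (D, 0)} : Finset (ι × ℕ)).card := h3.symm
        _ ≤ _ := Finset.card_le_card hsub
    · intro M hM
      by_cases h0 : M = ∅
      · exact Or.inl h0
      obtain ⟨x, hx⟩ := Finset.nonempty_of_ne_empty h0
      by_cases h1 : ∀ y ∈ M, y = x
      · exact Or.inr (Or.inr ⟨x, Finset.eq_singleton_iff_unique_mem.mpr ⟨hx, h1⟩⟩)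
      push_neg at h1
      obtain ⟨y, hy, hyx⟩ := h1
      exact Or.inr (Or.inl (Finset.Subset.antisymm hM.1
        (caseA_core hCD hC hD (hn C) hε hM hy hx hyx)))
  · -- the 3-edge case
    obtain ⟨I, J, K, hIJ, hIK, hJK, hεeq⟩ := Finset.card_eq_three.mp hcard3
    subst hεeq
    have hI : Odd (n I) := hodd I (by simp)
    have hJ : Odd (n J) := hodd J (by simp)
    have hK : Odd (n K) := hodd K (by simp)
    constructor
    · have hsub : ({(I, 0), (J, 0), (K, 0)} : Finset (ι × ℕ)) ⊆
          ({I, J, K} : Finset ι).biUnion (compVerts n) := by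
        intro z hz
        simp only [Finset.mem_insert, Finset.mem_singleton] at hz
        rcases hz with rfl | rfl | rfl
        · exact mem_bUnion_compVerts.mpr ⟨by simp, hn I⟩
        · exact mem_bUnion_compVerts.mpr ⟨by simp, hn J⟩
        · exact mem_bUnion_compVerts.mpr ⟨by simp, hn K⟩
      have h3 : ({(I, 0), (J, 0), (K, 0)} : Finset (ι × ℕ)).card = 3 := by
        rw [Finset.card_eq_three]
        refine ⟨_, _, _, ?_, ?_, ?_, rfl⟩ <;>
          · intro h; rw [Prod.mk.injEq] at h
            first
            | exact hIJ h.1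
            | exact hIK h.1
            | exact hJK h.1
      calc 3 = ({(I, 0), (J, 0), (K, 0)} : Finset (ι × ℕ)).card := h3.symm
        _ ≤ _ := Finset.card_le_card hsub
    · intro M hM
      by_cases h0 : M = ∅
      · exact Or.inl h0
      obtain ⟨x, hx⟩ := Finset.nonempty_of_ne_empty h0
      by_cases h1 : ∀ y ∈ M, y = x
      · exact Or.inr (Or.inr ⟨x, Finset.eq_singleton_iff_unique_mem.mpr ⟨hx, h1⟩⟩)
      push_neg at h1
      obtain ⟨y, hy, hyx⟩ := h1
      exact Or.inr (Or.inl (Finset.Subset.antisymm hM.1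
        (caseB_core hIJ hJK hIK hI hJ hK hε hM hy hx hyx)))
end

section
/- With Γ, ℍ and Γ•ℍ as in the construction, assume ℍ is connected. If 𝕄 is a nontrivial module of ℍ, then either all components in 𝕄 have even order or all components in 𝕄 have odd order. -/
theorem module_of_H_has_constant_parity {ι : Type*} [Fintype ι] [DecidableEq ι]
    (n : ι → ℕ) (hn : ∀ c, 0 < n c) (Hedges : Set (Finset ι))
    (hgood : GoodHEdges n Hedges)
    (hconn : ∀ C D : ι, Relation.ReflTransGen (HStep Hedges) C D)
    (S : Finset ι) (hS : HModule Hedges S)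
    (hne : S ≠ ∅) (hfull : S ≠ Finset.univ) (hsing : ∀ C, S ≠ {C}) :
    (∀ C ∈ S, Even (n C)) ∨ (∀ C ∈ S, Odd (n C)) := by
  obtain ⟨A, hA⟩ := Finset.nonempty_iff_ne_empty.2 hne
  obtain ⟨B, hB⟩ : ∃ B, B ∉ S := by
    by_contra h; push_neg at h; exact hfull (Finset.eq_univ_iff_forall.2 h)
  -- find an edge crossing S
  have key : ∀ B, Relation.ReflTransGen (HStep Hedges) A B → B ∉ S →
      ∃ ε ∈ Hedges, (ε ∩ S).Nonempty ∧ (ε \ S).Nonempty := by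
    intro B h
    induction h with
    | refl => intro hB; exact absurd hA hB
    | @tail b c h step ih =>
      intro hc
      by_cases hb : b ∈ S
      · obtain ⟨ε, hε, hbε, hcε⟩ := step
        exact ⟨ε, hε, ⟨b, Finset.mem_inter.2 ⟨hbε, hb⟩⟩,
          ⟨c, Finset.mem_sdiff.2 ⟨hcε, hc⟩⟩⟩
      · exact ih hb
  obtain ⟨ε, hε, hεS, hεnS⟩ := key B (hconn A B) hB
  rcases hgood ε hε with ⟨hc2, _, _⟩ | ⟨hc3, _⟩
  · -- 2-edge case
    obtain ⟨m, hmS, hinter, hswap⟩ := hS.1.2 ε ⟨hε, hc2⟩ hεS hεnS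
    have hmε : m ∈ ε :=
      (Finset.mem_inter.1 (hinter ▸ Finset.mem_singleton_self m)).1
    obtain ⟨x, hx⟩ : ∃ x, ε \ {m} = {x} := by
      apply Finset.card_eq_one.1
      rw [← Finset.erase_eq, Finset.card_erase_of_mem hmε, hc2]
    have hpar : ∀ y ∈ S, (Even (n x) → Odd (n y)) ∧ (Odd (n x) → Even (n y)) := by
      intro y hy
      have he' := hswap y hy
      rcases hgood _ he'.1 with ⟨_, ⟨C, hC, hCe⟩, ⟨D, hD, hDo⟩⟩ | ⟨hc3', _⟩
      · rw [hx] at hC hD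
        simp only [Finset.mem_union, Finset.mem_singleton] at hC hD
        constructor
        · intro hxe
          rcases hD with rfl | rfl
          · exact absurd hDo (Nat.not_odd_iff_even.2 hxe)
          · exact hDo
        · intro hxo
          rcases hC with rfl | rfl
          · exact absurd hxo (Nat.not_odd_iff_even.2 hCe)
          · exact hCe
      · exfalso; rw [he'.2] at hc3'; omega
    rcases Nat.even_or_odd (n x) with hx' | hx'
    · exact Or.inr fun y hy => (hpar y hy).1 hx'
    · exact Or.inl fun y hy => (hpar y hy).2 hx'
  · -- 3-edge case
    obtain ⟨m, hmS, hinter, hswap⟩ := hS.2.2 ε ⟨hε, hc3⟩ hεS hεnS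
    right
    intro y hy
    have he' := hswap y hy
    rcases hgood _ he'.1 with ⟨hc2', _⟩ | ⟨_, hodd'⟩
    · exfalso; rw [he'.2] at hc2'; omega
    · exact hodd' y (by simp)
end

section
/- With Γ, ℍ and Γ•ℍ as in the construction: if 𝕄 is a module of ℍ consisting only of single-vertex components of Γ, then the union of 𝕄 (a subset of V(Γ)) is a module of Γ•ℍ. -/
lemma mem_biUnion_compVerts {ι : Type*} [DecidableEq ι] (n : ι → ℕ) (hn : ∀ c, 0 < n c)
    (S : Finset ι) (h1 : ∀ C ∈ S, n C = 1) (X : ι) (x : ℕ) :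
    (X, x) ∈ S.biUnion (compVerts n) ↔ X ∈ S ∧ x = 0 := by
  simp only [Finset.mem_biUnion, compVerts, Finset.mem_image, Finset.mem_range]
  constructor
  · rintro ⟨c, hc, m, hm, h⟩
    obtain ⟨rfl, rfl⟩ : c = X ∧ m = x := by simpa [Prod.ext_iff] using h
    have := h1 _ hc
    exact ⟨hc, by omega⟩
  · rintro ⟨hX, rfl⟩
    exact ⟨X, hX, 0, hn X, rfl⟩

lemma aux3 {ι : Type*} [Fintype ι] [DecidableEq ι]
    (n : ι → ℕ) (hn : ∀ c, 0 < n c) (Hedges : Set (Finset ι))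
    (S : Finset ι) (h1 : ∀ C ∈ S, n C = 1)
    (A B C : ι) (hAB : A ≠ B) (hAC : A ≠ C) (hBC : B ≠ C)
    (oB : Odd (n B)) (oC : Odd (n C))
    (hAS : A ∈ S) (hBS : B ∉ S) (hCS : C ∉ S)
    (j k : ℕ) (hj : 2 * j ≤ n B - 1) (hk : 2 * k ≤ n C - 1)
    (hswap : ∀ N ∈ S, (({A, B, C} : Finset ι) \ {A}) ∪ {N} ∈ {ε ∈ Hedges | ε.card = 3})
    (e : Finset (ι × ℕ)) (he : e = {(A, 0), (B, 2 * j), (C, 2 * k)}) :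
    ∃ m ∈ S.biUnion (compVerts n), e ∩ S.biUnion (compVerts n) = {m} ∧
      ∀ q ∈ S.biUnion (compVerts n), (e \ {m}) ∪ {q} ∈ bEdges n Hedges := by
  subst he
  refine ⟨(A, 0), (mem_biUnion_compVerts n hn S h1 A 0).2 ⟨hAS, rfl⟩, ?_, ?_⟩
  · ext ⟨X, x⟩
    simp only [Finset.mem_inter, Finset.mem_insert, Finset.mem_singleton,
      mem_biUnion_compVerts n hn S h1, Prod.mk.injEq]
    constructor
    · rintro ⟨(⟨rfl, rfl⟩ | ⟨rfl, rfl⟩ | ⟨rfl, rfl⟩), hXS, h0⟩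
      · exact ⟨rfl, rfl⟩
      · exact absurd hXS hBS
      · exact absurd hXS hCS
    · rintro ⟨rfl, rfl⟩
      exact ⟨Or.inl ⟨rfl, rfl⟩, hAS, rfl⟩
  · rintro ⟨N, y⟩ hq
    obtain ⟨hNS, rfl⟩ := (mem_biUnion_compVerts n hn S h1 N y).1 hq
    have hBN : B ≠ N := fun h => hBS (h ▸ hNS)
    have hCN : C ≠ N := fun h => hCS (h ▸ hNS)
    have hsw := hswap N hNS
    have heq : (({A, B, C} : Finset ι) \ {A}) ∪ {N} = {B, C, N} := by
      ext x
      simp only [Finset.mem_union, Finset.mem_sdiff, Finset.mem_insert, Finset.mem_singleton]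
      constructor
      · rintro (⟨(rfl | rfl | rfl), hx⟩ | rfl)
        · exact absurd rfl hx
        · exact Or.inl rfl
        · exact Or.inr (Or.inl rfl)
        · exact Or.inr (Or.inr rfl)
      · rintro (rfl | rfl | rfl)
        · exact Or.inl ⟨Or.inr (Or.inl rfl), fun h => hAB h.symm⟩
        · exact Or.inl ⟨Or.inr (Or.inr rfl), fun h => hAC h.symm⟩
        · exact Or.inr rfl
    rw [heq] at hsw
    refine Or.inr (Or.inr ⟨B, C, N, hBC, hCN, hBN, oB, oC, ?_, hsw.1, j, k, 0, hj, hk,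
      by simp, ?_⟩)
    · rw [h1 N hNS]; exact odd_one
    · ext ⟨X, x⟩
      simp only [Finset.mem_union, Finset.mem_sdiff, Finset.mem_insert, Finset.mem_singleton,
        Prod.mk.injEq, Nat.mul_zero]
      constructor
      · rintro (⟨(⟨rfl, rfl⟩ | ⟨rfl, rfl⟩ | ⟨rfl, rfl⟩), hx⟩ | ⟨rfl, rfl⟩)
        · exact absurd ⟨rfl, rfl⟩ hx
        · exact Or.inl ⟨rfl, rfl⟩
        · exact Or.inr (Or.inl ⟨rfl, rfl⟩)
        · exact Or.inr (Or.inr ⟨rfl, rfl⟩)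
      · rintro (⟨rfl, rfl⟩ | ⟨rfl, rfl⟩ | ⟨rfl, rfl⟩)
        · exact Or.inl ⟨Or.inr (Or.inl ⟨rfl, rfl⟩), fun h => hAB h.1.symm⟩
        · exact Or.inl ⟨Or.inr (Or.inr ⟨rfl, rfl⟩), fun h => hAC h.1.symm⟩
        · exact Or.inr ⟨rfl, rfl⟩

theorem singleton_components_module_lifts {ι : Type*} [Fintype ι] [DecidableEq ι]
    (n : ι → ℕ) (hn : ∀ c, 0 < n c) (Hedges : Set (Finset ι))
    (hgood : GoodHEdges n Hedges)
    (S : Finset ι) (hS : HModule Hedges S) (h1 : ∀ C ∈ S, n C = 1) :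
    IsModule (bVerts n) (bEdges n Hedges) (S.biUnion (compVerts n)) := by
  classical
  have memM := mem_biUnion_compVerts n hn S h1
  constructor
  · intro p hp
    obtain ⟨X, x⟩ := p
    obtain ⟨hXS, rfl⟩ := (memM X x).1 hp
    exact Finset.mem_biUnion.2 ⟨X, Finset.mem_univ X,
      Finset.mem_image.2 ⟨0, Finset.mem_range.2 (hn X), rfl⟩⟩
  · rintro e he hne1 hne2
    obtain ⟨p, hp⟩ := hne1
    rw [Finset.mem_inter] at hp
    obtain ⟨hpe, hpM⟩ := hp
    rcases he with ⟨C, hodd, h3, i, j, k, hij, hjk, hk, rfl⟩ |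
      ⟨C, D, hCD, hev, hodd, hmem, i, j, k, hij, hjC, hkD, rfl⟩ |
      ⟨I, J, K, hIJ, hJK, hIK, oI, oJ, oK, hmem, i, j, k, hiI, hjJ, hkK, rfl⟩
    · exfalso
      have hCS : C ∈ S := by
        rcases Finset.mem_insert.1 hpe with rfl | h
        · exact ((memM _ _).1 hpM).1
        rcases Finset.mem_insert.1 h with rfl | h
        · exact ((memM _ _).1 hpM).1
        rw [Finset.mem_singleton] at h; subst h
        exact ((memM _ _).1 hpM).1
      have := h1 C hCS; omega
    · -- size-2 edge case
      have hCS : C ∉ S := by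
        intro h
        rw [h1 C h, Nat.even_iff] at hev; omega
      have hDk : D ∈ S ∧ k = 0 := by
        rcases Finset.mem_insert.1 hpe with rfl | h
        · exact absurd ((memM _ _).1 hpM).1 hCS
        rcases Finset.mem_insert.1 h with rfl | h
        · exact absurd ((memM _ _).1 hpM).1 hCS
        rw [Finset.mem_singleton] at h; subst h
        obtain ⟨hD, h0⟩ := (memM _ _).1 hpM
        exact ⟨hD, by omega⟩
      obtain ⟨hDS, rfl⟩ := hDk
      have hε : ({C, D} : Finset ι) ∈ {ε ∈ Hedges | ε.card = 2} :=
        ⟨hmem, Finset.card_pair hCD⟩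
      obtain ⟨m', hm'S, hcap, hswap⟩ := hS.1.2 {C, D} hε
        ⟨D, Finset.mem_inter.2 ⟨by simp, hDS⟩⟩
        ⟨C, Finset.mem_sdiff.2 ⟨by simp, hCS⟩⟩
      have hm'D : m' = D := by
        have hD : D ∈ ({C, D} : Finset ι) ∩ S := Finset.mem_inter.2 ⟨by simp, hDS⟩
        rw [hcap, Finset.mem_singleton] at hD; exact hD.symm
      obtain rfl : D = m' := hm'D.symm
      refine ⟨(D, 0), (memM D 0).2 ⟨hDS, rfl⟩, ?_, ?_⟩
      · ext ⟨X, x⟩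
        simp only [Finset.mem_inter, Finset.mem_insert, Finset.mem_singleton,
          memM, Prod.mk.injEq, Nat.mul_zero]
        constructor
        · rintro ⟨(⟨rfl, rfl⟩ | ⟨rfl, rfl⟩ | ⟨rfl, rfl⟩), hXS, h0⟩
          · exact absurd hXS hCS
          · exact absurd hXS hCS
          · exact ⟨rfl, rfl⟩
        · rintro ⟨rfl, rfl⟩
          exact ⟨Or.inr (Or.inr ⟨rfl, rfl⟩), hDS, rfl⟩
      · rintro ⟨N, y⟩ hq
        obtain ⟨hNS, rfl⟩ := (memM N y).1 hq
        have hCN : C ≠ N := fun h => hCS (h ▸ hNS)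
        have hsw := hswap N hNS
        have heq : (({C, D} : Finset ι) \ {D}) ∪ {N} = {C, N} := by
          ext x
          simp only [Finset.mem_union, Finset.mem_sdiff, Finset.mem_insert,
            Finset.mem_singleton]
          constructor
          · rintro (⟨(rfl | rfl), hx⟩ | rfl)
            · exact Or.inl rfl
            · exact absurd rfl hx
            · exact Or.inr rfl
          · rintro (rfl | rfl)
            · exact Or.inl ⟨Or.inl rfl, fun h => hCD h⟩
            · exact Or.inr rfl
        rw [heq] at hsw
        refine Or.inr (Or.inl ⟨C, N, hCN, hev, ?_, hsw.1, i, j, 0, hij, hjC, by simp, ?_⟩)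
        · rw [h1 N hNS]; exact odd_one
        · ext ⟨X, x⟩
          simp only [Finset.mem_union, Finset.mem_sdiff, Finset.mem_insert,
            Finset.mem_singleton, Prod.mk.injEq, Nat.mul_zero]
          constructor
          · rintro (⟨(⟨rfl, rfl⟩ | ⟨rfl, rfl⟩ | ⟨rfl, rfl⟩), hx⟩ | ⟨rfl, rfl⟩)
            · exact Or.inl ⟨rfl, rfl⟩
            · exact Or.inr (Or.inl ⟨rfl, rfl⟩)
            · exact absurd ⟨rfl, rfl⟩ hx
            · exact Or.inr (Or.inr ⟨rfl, rfl⟩)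
          · rintro (⟨rfl, rfl⟩ | ⟨rfl, rfl⟩ | ⟨rfl, rfl⟩)
            · exact Or.inl ⟨Or.inl ⟨rfl, rfl⟩, fun h => hCD h.1⟩
            · exact Or.inl ⟨Or.inr (Or.inl ⟨rfl, rfl⟩), fun h => hCD h.1⟩
            · exact Or.inr ⟨rfl, rfl⟩
    · -- size-3 edge case
      have hcard : ({I, J, K} : Finset ι).card = 3 := by
        rw [Finset.card_insert_of_notMem (by simp [hIJ, hIK]), Finset.card_pair hJK]
      have hne : (({I, J, K} : Finset ι) ∩ S).Nonempty := by
        rcases Finset.mem_insert.1 hpe with rfl | h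
        · exact ⟨I, Finset.mem_inter.2 ⟨by simp, ((memM _ _).1 hpM).1⟩⟩
        rcases Finset.mem_insert.1 h with rfl | h
        · exact ⟨J, Finset.mem_inter.2 ⟨by simp, ((memM _ _).1 hpM).1⟩⟩
        rw [Finset.mem_singleton] at h; subst h
        exact ⟨K, Finset.mem_inter.2 ⟨by simp, ((memM _ _).1 hpM).1⟩⟩
      obtain ⟨q, hq⟩ := hne2
      rw [Finset.mem_sdiff] at hq
      have hsd : (({I, J, K} : Finset ι) \ S).Nonempty := by
        rcases Finset.mem_insert.1 hq.1 with rfl | h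
        · refine ⟨I, Finset.mem_sdiff.2 ⟨by simp, fun hIS => ?_⟩⟩
          exact hq.2 ((memM _ _).2 ⟨hIS, by have := h1 I hIS; omega⟩)
        rcases Finset.mem_insert.1 h with rfl | h
        · refine ⟨J, Finset.mem_sdiff.2 ⟨by simp, fun hJS => ?_⟩⟩
          exact hq.2 ((memM _ _).2 ⟨hJS, by have := h1 J hJS; omega⟩)
        rw [Finset.mem_singleton] at h; subst h
        refine ⟨K, Finset.mem_sdiff.2 ⟨by simp, fun hKS => ?_⟩⟩
        exact hq.2 ((memM _ _).2 ⟨hKS, by have := h1 K hKS; omega⟩)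
      obtain ⟨m', hm'S, hcap, hswap⟩ := hS.2.2 {I, J, K} ⟨hmem, hcard⟩ hne hsd
      have hm'ε : m' ∈ ({I, J, K} : Finset ι) := by
        have : m' ∈ ({I, J, K} : Finset ι) ∩ S := by rw [hcap]; exact Finset.mem_singleton_self m'
        exact (Finset.mem_inter.1 this).1
      have hmem' : ∀ X ∈ ({I, J, K} : Finset ι), X ∈ S → X = m' := by
        intro X hX hXS
        have : X ∈ ({I, J, K} : Finset ι) ∩ S := Finset.mem_inter.2 ⟨hX, hXS⟩
        rw [hcap, Finset.mem_singleton] at this; exact this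
      rcases Finset.mem_insert.1 hm'ε with h0 | h'
      · -- m' = I
        obtain rfl : I = m' := h0.symm
        have hJS : J ∉ S := fun h => hIJ ((hmem' J (by simp) h).symm)
        have hKS : K ∉ S := fun h => hIK ((hmem' K (by simp) h).symm)
        have hi0 : i = 0 := by have := h1 I hm'S; omega
        subst hi0
        exact aux3 n hn Hedges S h1 I J K hIJ hIK hJK oJ oK hm'S hJS hKS j k hjJ hkK hswap _
          (by norm_num)
      rcases Finset.mem_insert.1 h' with h0 | h'
      · -- m' = J
        obtain rfl : J = m' := h0.symm
        have hIS : I ∉ S := fun h => hIJ (hmem' I (by simp) h)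
        have hKS : K ∉ S := fun h => hJK ((hmem' K (by simp) h).symm)
        have hj0 : j = 0 := by have := h1 J hm'S; omega
        subst hj0
        have hperm : ({I, J, K} : Finset ι) = {J, I, K} := by
          ext x
          simp only [Finset.mem_insert, Finset.mem_singleton]
          tauto
        rw [hperm] at hswap
        refine aux3 n hn Hedges S h1 J I K hIJ.symm hJK hIK oI oK hm'S hIS hKS i k hiI hkK
          hswap _ ?_
        ext ⟨X, x⟩
        simp only [Finset.mem_insert, Finset.mem_singleton, Prod.mk.injEq, Nat.mul_zero]
        constructor
        · rintro (h | h | h)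
          · exact Or.inr (Or.inl h)
          · exact Or.inl h
          · exact Or.inr (Or.inr h)
        · rintro (h | h | h)
          · exact Or.inr (Or.inl h)
          · exact Or.inl h
          · exact Or.inr (Or.inr h)
      rw [Finset.mem_singleton] at h'
      obtain rfl : K = m' := h'.symm
      -- m' = K
      have hIS : I ∉ S := fun h => hIK (hmem' I (by simp) h)
      have hJS : J ∉ S := fun h => hJK (hmem' J (by simp) h)
      have hk0 : k = 0 := by have := h1 K hm'S; omega
      subst hk0
      have hperm : ({I, J, K} : Finset ι) = {K, I, J} := by
        ext x
        simp only [Finset.mem_insert, Finset.mem_singleton]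
        tauto
      rw [hperm] at hswap
      refine aux3 n hn Hedges S h1 K I J hIK.symm hJK.symm hIJ oI oJ hm'S hIS hJS i j hiI hjJ
        hswap _ ?_
      ext ⟨X, x⟩
      simp only [Finset.mem_insert, Finset.mem_singleton, Prod.mk.injEq, Nat.mul_zero]
      constructor
      · rintro (h | h | h)
        · exact Or.inr (Or.inl h)
        · exact Or.inr (Or.inr h)
        · exact Or.inl h
      · rintro (h | h | h)
        · exact Or.inr (Or.inr h)
        · exact Or.inl h
        · exact Or.inr (Or.inl h)
end
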